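/- arXiv:math/0606444 — 9 statements merged into one kernel-verified Lean document; each statement's English description precedes it below -/
import Mathlib

section
/- If x₁,...,xₖ are mutually commuting positive semidefinite n×n complex matrices, y₁,...,yₖ are mutually commuting positive semidefinite n×n complex matrices, and xᵢ ≤ yᵢ (i.e., yᵢ - xᵢ is positive semidefinite) for each i, then trace(x₁⋯xₖ) ≤ trace(y₁⋯yₖ). -/
open Matrix
open scoped ComplexOrder

local notation "⟪" x ", " y "⟫" => @inner ℂ _ _ x y

noncomputable section


open Finset in
/-- AM-GM: positive reals with product 1 have sum at least the cardinality. -/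
lemma card_le_sum_of_prod_eq_one {N : ℕ} (t : Fin N → ℝ) (ht : ∀ i, 0 < t i)
    (h1 : ∏ i, t i = 1) : (N : ℝ) ≤ ∑ i, t i := by
  rcases Nat.eq_zero_or_pos N with h | h
  · subst h; simp
  have hw : ∀ i ∈ (univ : Finset (Fin N)), (0:ℝ) ≤ (N:ℝ)⁻¹ := by
    intro i _; positivity
  have hw' : ∑ _i ∈ (univ : Finset (Fin N)), (N:ℝ)⁻¹ = 1 := by
    simp [Finset.sum_const]
    field_simp
  have hz : ∀ i ∈ (univ : Finset (Fin N)), (0:ℝ) ≤ t i := fun i _ => (ht i).le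
  have key := Real.geom_mean_le_arith_mean_weighted univ (fun _ => (N:ℝ)⁻¹) t hw hw' hz
  have hprod : ∏ i ∈ (univ : Finset (Fin N)), t i ^ ((N:ℝ)⁻¹) = 1 := by
    rw [Real.finset_prod_rpow univ t (fun i _ => (ht i).le), h1, Real.one_rpow]
  rw [hprod] at key
  have : ∑ i ∈ univ, (N:ℝ)⁻¹ * t i = (N:ℝ)⁻¹ * ∑ i, t i := by
    rw [Finset.mul_sum]
  rw [this] at key
  have hN : (0:ℝ) < (N:ℝ) := by exact_mod_cast h
  calc (N:ℝ) = (N:ℝ) * 1 := by ring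
  _ ≤ (N:ℝ) * ((N:ℝ)⁻¹ * ∑ i, t i) := by
      exact mul_le_mul_of_nonneg_left key hN.le
  _ = ∑ i, t i := by field_simp

open Finset in
lemma core_scalar {k n : ℕ} (p : Fin n → ℝ) (b : Fin k → Fin n → ℝ) (a : Fin k → ℝ)
    (hp : ∀ m, 0 ≤ p m) (hp1 : ∑ m, p m = 1)
    (hb : ∀ i m, 0 ≤ b i m) (ha : ∀ i, 0 ≤ a i)
    (cond : ∀ (i : Fin k) (s : Fin n → ℝ),
      a i * (∑ m, p m * s m) ^ 2 ≤ ∑ m, p m * b i m * s m ^ 2) :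
    ∏ i, a i ≤ ∑ m, p m * ∏ i, b i m := by
  have hS0 : 0 ≤ ∑ m, p m * ∏ i, b i m := by
    apply Finset.sum_nonneg; intro m _
    exact mul_nonneg (hp m) (Finset.prod_nonneg fun i _ => hb i m)
  by_cases hz : ∃ i, a i = 0
  · obtain ⟨i, hi⟩ := hz
    calc ∏ i, a i = 0 := Finset.prod_eq_zero (Finset.mem_univ i) hi
    _ ≤ _ := hS0
  push_neg at hz
  have hapos : ∀ i, 0 < a i := fun i => lt_of_le_of_ne (ha i) (Ne.symm (hz i))
  -- positivity of b on the support of p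
  have hbpos : ∀ (i : Fin k) (m : Fin n), 0 < p m → 0 < b i m := by
    intro i m hpm
    rcases (hb i m).lt_or_eq with h | h
    · exact h
    exfalso
    have key := cond i (fun m' => if m' = m then 1 else 0)
    have e1 : ∑ m', p m' * (if m' = m then (1:ℝ) else 0) = p m := by
      rw [Finset.sum_eq_single m]
      · simp
      · intro m' _ hne; simp [hne]
      · intro hmem; exact absurd (Finset.mem_univ m) hmem
    have e2 : ∑ m', p m' * b i m' * (if m' = m then (1:ℝ) else 0) ^ 2 = p m * b i m := by
      rw [Finset.sum_eq_single m]
      · simp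
      · intro m' _ hne; simp [hne]
      · intro hmem; exact absurd (Finset.mem_univ m) hmem
    rw [e1, e2, ← h, mul_zero] at key
    have : 0 < a i * p m ^ 2 := mul_pos (hapos i) (pow_pos hpm 2)
    linarith
  have hp_of_b : ∀ (i : Fin k) (m : Fin n), b i m = 0 → p m = 0 := by
    intro i m hbm
    by_contra hpm
    have : 0 < p m := lt_of_le_of_ne (hp m) (Ne.symm hpm)
    exact absurd hbm (ne_of_gt (hbpos i m this))
  set H : Fin k → ℝ := fun i => ∑ m, p m / b i m with hH
  have hHnn : ∀ i, 0 ≤ H i := by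
    intro i; apply Finset.sum_nonneg; intro m _
    exact div_nonneg (hp m) (hb i m)
  have hmexists : ∃ m, 0 < p m := by
    by_contra hno
    push_neg at hno
    have : ∀ m ∈ (univ : Finset (Fin n)), p m = 0 :=
      fun m _ => le_antisymm (hno m) (hp m)
    rw [Finset.sum_eq_zero this] at hp1
    norm_num at hp1
  have hHpos : ∀ i, 0 < H i := by
    intro i
    obtain ⟨m, hm⟩ := hmexists
    have hb' := hbpos i m hm
    have : 0 < p m / b i m := div_pos hm hb'
    calc (0:ℝ) < p m / b i m := this
    _ ≤ H i := Finset.single_le_sum (f := fun m => p m / b i m)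
        (fun m' _ => div_nonneg (hp m') (hb i m')) (Finset.mem_univ m)
  have haH : ∀ i, a i * H i ≤ 1 := by
    intro i
    have key := cond i (fun m => (b i m)⁻¹)
    have e1 : ∑ m, p m * (b i m)⁻¹ = H i := by
      apply Finset.sum_congr rfl; intro m _; rw [div_eq_mul_inv]
    have e2 : ∑ m, p m * b i m * ((b i m)⁻¹) ^ 2 = H i := by
      apply Finset.sum_congr rfl; intro m _
      rcases (hb i m).lt_or_eq with h | h
      · field_simp
      · rw [← h]; rw [hp_of_b i m h.symm]; simp
    rw [e1, e2] at key
    have h2 := hHpos i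
    nlinarith [key, h2]
  -- key inequality : 1 ≤ S * ∏ H
  set S : ℝ := ∑ m, p m * ∏ i, b i m with hSdef
  have key2 : 1 ≤ S * ∏ i, H i := by
    -- pointwise AM-GM summed against p
    have pointwise : ∀ m, p m * ((k:ℝ) + 1) ≤
        p m * ((∏ i, b i m * H i) + ∑ i, (b i m * H i)⁻¹) := by
      intro m
      rcases (hp m).lt_or_eq with hpm | hpm
      · apply mul_le_mul_of_nonneg_left _ (hp m)
        have hbH : ∀ i, 0 < b i m * H i := fun i => mul_pos (hbpos i m hpm) (hHpos i)
        have amgm := card_le_sum_of_prod_eq_one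
          (t := Fin.cons (∏ i, b i m * H i) (fun i => (b i m * H i)⁻¹)) ?_ ?_
        · have hs := Fin.sum_cons (∏ i, b i m * H i) (fun i => (b i m * H i)⁻¹)
          rw [hs] at amgm
          push_cast at amgm ⊢
          linarith [amgm]
        · intro j
          refine Fin.cases ?_ ?_ j
          · simp only [Fin.cons_zero]
            exact Finset.prod_pos fun i _ => hbH i
          · intro i; simp only [Fin.cons_succ]
            exact inv_pos.mpr (hbH i)
        · rw [Fin.prod_cons]
          rw [← Finset.prod_mul_distrib]
          rw [Finset.prod_congr rfl (fun i _ => mul_inv_cancel₀ (ne_of_gt (hbH i)))]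
          simp
      · rw [← hpm]; simp
    have summed := Finset.sum_le_sum (fun m (_ : m ∈ univ) => pointwise m)
    rw [← Finset.sum_mul] at summed
    rw [hp1, one_mul] at summed
    -- compute RHS
    have rhs_eq : ∑ m, p m * ((∏ i, b i m * H i) + ∑ i, (b i m * H i)⁻¹)
        = S * ∏ i, H i + (k:ℝ) := by
      have e3 : ∀ m, p m * ((∏ i, b i m * H i) + ∑ i, (b i m * H i)⁻¹)
          = p m * (∏ i, b i m) * (∏ i, H i) + ∑ i, p m * (b i m * H i)⁻¹ := by
        intro m
        rw [mul_add, Finset.prod_mul_distrib, Finset.mul_sum]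
        ring
      rw [Finset.sum_congr rfl (fun m _ => e3 m), Finset.sum_add_distrib]
      congr 1
      · rw [← Finset.sum_mul]
      · rw [Finset.sum_comm]
        have e4 : ∀ i, ∑ m, p m * (b i m * H i)⁻¹ = 1 := by
          intro i
          have : ∀ m, p m * (b i m * H i)⁻¹ = (p m / b i m) * (H i)⁻¹ := by
            intro m
            rcases (hb i m).lt_or_eq with h | h
            · rw [mul_inv]; field_simp
            · rw [← h, hp_of_b i m h.symm]; simp
          rw [Finset.sum_congr rfl (fun m _ => this m), ← Finset.sum_mul]
          exact mul_inv_cancel₀ (ne_of_gt (hHpos i))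
        rw [Finset.sum_congr rfl (fun i _ => e4 i)]
        simp
    rw [rhs_eq] at summed
    linarith
  -- conclude
  have hPH : 0 < ∏ i, H i := Finset.prod_pos fun i _ => hHpos i
  have step : ∏ i, a i ≤ (∏ i, H i)⁻¹ := by
    have : ∏ i, a i * H i ≤ 1 := by
      calc ∏ i, a i * H i ≤ ∏ i, (1:ℝ) :=
        Finset.prod_le_prod (fun i _ => mul_nonneg (ha i) (hHnn i)) (fun i _ => haH i)
      _ = 1 := by simp
    rw [Finset.prod_mul_distrib] at this
    have h2 : ∏ i, a i ≤ 1 / ∏ i, H i := (le_div_iff₀ hPH).mpr this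
    simpa [one_div] using h2
  calc ∏ i, a i ≤ (∏ i, H i)⁻¹ := step
  _ = (∏ i, H i)⁻¹ * 1 := by ring
  _ ≤ (∏ i, H i)⁻¹ * (S * ∏ i, H i) := by
      exact mul_le_mul_of_nonneg_left key2 (inv_nonneg.mpr hPH.le)
  _ = S := by field_simp


lemma toEuclideanLin_mul' {n : ℕ} (A B : Matrix (Fin n) (Fin n) ℂ) :
    Matrix.toEuclideanLin (A * B) =
      (Matrix.toEuclideanLin A) ∘ₗ (Matrix.toEuclideanLin B) := by
  apply LinearMap.ext
  intro v
  simp only [LinearMap.comp_apply, Matrix.toEuclideanLin_apply]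
  simp [Matrix.mulVec_mulVec]

lemma toEuclideanLin_one' {n : ℕ} :
    Matrix.toEuclideanLin (1 : Matrix (Fin n) (Fin n) ℂ) = LinearMap.id := by
  apply LinearMap.ext
  intro v
  simp [Matrix.toEuclideanLin_apply]

lemma psd_inner_nonneg {n : ℕ} {A : Matrix (Fin n) (Fin n) ℂ} (hA : A.PosSemidef)
    (t : EuclideanSpace ℂ (Fin n)) :
    0 ≤ ⟪t, Matrix.toEuclideanLin A t⟫ := by
  have h := hA.dotProduct_mulVec_nonneg (WithLp.ofLp t)
  rw [EuclideanSpace.inner_eq_star_dotProduct, Matrix.ofLp_toEuclideanLin_apply, dotProduct_comm]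
  exact h

lemma joint_eigenbasis {n k : ℕ} (z : Fin k → Matrix (Fin n) (Fin n) ℂ)
    (hz : ∀ i, (z i).PosSemidef) (hzc : ∀ i j, Commute (z i) (z j)) :
    ∃ (v : OrthonormalBasis (Fin n) ℂ (EuclideanSpace ℂ (Fin n))) (μ : Fin n → Fin k → ℝ),
      (∀ j i, 0 ≤ μ j i) ∧
      ∀ i j, Matrix.toEuclideanLin (z i) (v j) = (μ j i : ℂ) • v j := by
  classical
  set T : Fin k → Module.End ℂ (EuclideanSpace ℂ (Fin n)) :=
    fun i => Matrix.toEuclideanLin (z i) with hT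
  have hsym : ∀ i, (T i).IsSymmetric :=
    fun i => (Matrix.isHermitian_iff_isSymmetric).mp (hz i).1
  have hcomm : Pairwise (Function.onFun Commute T) := by
    intro i j _
    show T i * T j = T j * T i
    have : ∀ i j, T i * T j = Matrix.toEuclideanLin (z i * z j) := by
      intro i j
      rw [toEuclideanLin_mul']
      rfl
    rw [this, this, hzc i j]
  set V : (Fin k → ℂ) → Submodule ℂ (EuclideanSpace ℂ (Fin n)) :=
    fun α => ⨅ i, Module.End.eigenspace (T i) (α i) with hVdef
  have hV' := LinearMap.IsSymmetric.orthogonalFamily_iInf_eigenspaces hsym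
  have htop : ⨆ α, V α = ⊤ :=
    LinearMap.IsSymmetric.iSup_iInf_eq_top_of_commute hsym hcomm
  have hindep : iSupIndep V := hV'.independent
  letI : Fintype {α : Fin k → ℂ // V α ≠ ⊥} := hindep.fintypeNeBotOfFiniteDimensional
  have hV₀' := hV'.comp (Subtype.val_injective (p := fun α => V α ≠ ⊥))
  have htop₀ : ⨆ α₀ : {α : Fin k → ℂ // V α ≠ ⊥}, V α₀.1 = ⊤ := by
    apply le_antisymm le_top
    rw [← htop]
    apply iSup_le
    intro α
    by_cases hα : V α = ⊥
    · rw [hα]; exact bot_le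
    · exact le_iSup (fun α₀ : {α : Fin k → ℂ // V α ≠ ⊥} => V α₀.1) ⟨α, hα⟩
  have internal : DirectSum.IsInternal (fun α₀ : {α : Fin k → ℂ // V α ≠ ⊥} => V α₀.1) :=
    (DirectSum.isInternal_submodule_iff_iSupIndep_and_iSup_eq_top _).mpr
      ⟨hindep.comp Subtype.val_injective, htop₀⟩
  have hn : Module.finrank ℂ (EuclideanSpace ℂ (Fin n)) = n := finrank_euclideanSpace_fin
  set v := internal.subordinateOrthonormalBasis hn hV₀' with hv
  set χ : Fin n → Fin k → ℂ :=
    fun j => (internal.subordinateOrthonormalBasisIndex hn j hV₀').1 with hχ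
  have heig : ∀ i j, T i (v j) = χ j i • v j := by
    intro i j
    have hmem := internal.subordinateOrthonormalBasis_subordinate hn j hV₀'
    have := (Submodule.mem_iInf _).mp hmem i
    exact (Module.End.mem_eigenspace_iff).mp this
  have hnonneg : ∀ j i, 0 ≤ χ j i := by
    intro j i
    have h1 : ⟪v j, T i (v j)⟫ = χ j i := by
      rw [heig i j, inner_smul_right]
      have : ⟪v j, v j⟫ = 1 := by
        simpa using orthonormal_iff_ite.mp v.orthonormal j j
      rw [this, mul_one]
    rw [← h1]
    exact psd_inner_nonneg (hz i) (v j)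
  refine ⟨v, fun j i => (χ j i).re, ?_, ?_⟩
  · intro j i
    have := hnonneg j i
    rw [Complex.le_def] at this
    simpa using this.1
  · intro i j
    have him : (χ j i).im = 0 := by
      have := hnonneg j i
      rw [Complex.le_def] at this
      simpa using this.2.symm
    have : ((χ j i).re : ℂ) = χ j i := by
      apply Complex.ext <;> simp [him]
    rw [this]
    exact heig i j

lemma trace_eq_sum_inner' {n : ℕ} (A : Matrix (Fin n) (Fin n) ℂ)
    (v : OrthonormalBasis (Fin n) ℂ (EuclideanSpace ℂ (Fin n))) :
    A.trace = ∑ j, ⟪v j, Matrix.toEuclideanLin A (v j)⟫ := by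
  have h1 : A.trace = LinearMap.trace ℂ _ (Matrix.toEuclideanLin A) := by
    rw [Matrix.toEuclideanLin_eq_toLin_orthonormal,
      LinearMap.trace_eq_matrix_trace ℂ ((EuclideanSpace.basisFun (Fin n) ℂ).toBasis),
      LinearMap.toMatrix_toLin]
  rw [h1, LinearMap.trace_eq_matrix_trace ℂ v.toBasis, Matrix.trace]
  apply Finset.sum_congr rfl
  intro j _
  rw [Matrix.diag]
  rw [LinearMap.toMatrix_apply]
  rw [v.coe_toBasis_repr_apply, v.repr_apply_apply, v.coe_toBasis]

lemma prod_eigen' {n k : ℕ} (z : Fin k → Matrix (Fin n) (Fin n) ℂ)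
    (u : EuclideanSpace ℂ (Fin n)) (c : Fin k → ℂ)
    (h : ∀ i, Matrix.toEuclideanLin (z i) u = c i • u) :
    Matrix.toEuclideanLin ((List.ofFn z).prod) u = (∏ i, c i) • u := by
  have main : ∀ l : List (Fin k),
      Matrix.toEuclideanLin ((l.map z).prod) u = ((l.map c).prod) • u := by
    intro l
    induction l with
    | nil => simp [toEuclideanLin_one']
    | cons a l ih =>
        simp only [List.map_cons, List.prod_cons]
        rw [toEuclideanLin_mul', LinearMap.comp_apply, ih, LinearMap.map_smul, h a,
          smul_smul, mul_comm ((List.map c l).prod) (c a)]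
  have h2 := main (List.finRange k)
  rw [← List.ofFn_eq_map] at h2
  rw [h2]
  congr 1

lemma inner_sum_eigen {n : ℕ} (w : OrthonormalBasis (Fin n) ℂ (EuclideanSpace ℂ (Fin n)))
    (α β : Fin n → ℂ) (R : EuclideanSpace ℂ (Fin n) →ₗ[ℂ] EuclideanSpace ℂ (Fin n))
    (hR : ∀ m, R (w m) = β m • w m) :
    ⟪∑ m, α m • w m, R (∑ m, α m • w m)⟫ = ∑ m, starRingEnd ℂ (α m) * (α m * β m) := by
  have h1 : R (∑ m, α m • w m) = ∑ m, (α m * β m) • w m := by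
    rw [map_sum]
    apply Finset.sum_congr rfl
    intro m _
    rw [LinearMap.map_smul, hR m, smul_smul]
  rw [h1, sum_inner]
  apply Finset.sum_congr rfl
  intro m _
  rw [inner_smul_left, w.orthonormal.inner_right_fintype (fun m => α m * β m) m]

lemma eigen_cs {n : ℕ} {A : Matrix (Fin n) (Fin n) ℂ} (hA : A.PosSemidef)
    {u : EuclideanSpace ℂ (Fin n)} {a : ℝ} (t : EuclideanSpace ℂ (Fin n))
    (hu : ⟪u, u⟫ = 1) (heig : Matrix.toEuclideanLin A u = (a : ℂ) • u) :
    (a : ℂ) * (⟪u, t⟫ * starRingEnd ℂ ⟪u, t⟫) ≤ ⟪t, Matrix.toEuclideanLin A t⟫ := by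
  set X := Matrix.toEuclideanLin A with hX
  have hsym : X.IsSymmetric := (Matrix.isHermitian_iff_isSymmetric).mp hA.1
  set τ : ℂ := ⟪u, t⟫ with hτ
  have h1 : ⟪t, X u⟫ = (a : ℂ) * starRingEnd ℂ τ := by
    rw [heig, inner_smul_right, ← inner_conj_symm, hτ]
  have h2 : ⟪u, X t⟫ = (a : ℂ) * τ := by
    rw [← hsym u t, heig, inner_smul_left, Complex.conj_ofReal]
  have h3 : ⟪u, X u⟫ = (a : ℂ) := by
    rw [heig, inner_smul_right, hu, mul_one]
  have key : ⟪t - τ • u, X (t - τ • u)⟫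
      = ⟪t, X t⟫ - (a : ℂ) * (τ * starRingEnd ℂ τ) := by
    rw [map_sub, LinearMap.map_smul]
    simp only [inner_sub_left, inner_sub_right, inner_smul_left, inner_smul_right,
      h1, h2, h3]
    ring
  have h0 := psd_inner_nonneg hA (t - τ • u)
  rw [← hX] at h0
  rw [key] at h0
  have := sub_nonneg.mp h0
  exact this

/-- If `x₁,…,xₖ` are mutually commuting PSD matrices, `y₁,…,yₖ` are mutually commuting
PSD matrices, and `xᵢ ≤ yᵢ` (Loewner order) for each `i`, then
`trace (x₁ ⋯ xₖ) ≤ trace (y₁ ⋯ yₖ)`. -/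
theorem trace_prod_le_trace_prod (n k : ℕ)
    (x y : Fin k → Matrix (Fin n) (Fin n) ℂ)
    (hx : ∀ i, (x i).PosSemidef) (hy : ∀ i, (y i).PosSemidef)
    (hxc : ∀ i j, Commute (x i) (x j)) (hyc : ∀ i j, Commute (y i) (y j))
    (hle : ∀ i, (y i - x i).PosSemidef) :
    ((List.ofFn x).prod).trace ≤ ((List.ofFn y).prod).trace := by
  classical
  obtain ⟨v, μx, hμx0, hveig⟩ := joint_eigenbasis x hx hxc
  obtain ⟨w, μy, hμy0, hweig⟩ := joint_eigenbasis y hy hyc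
  have hvnorm : ∀ j, ⟪v j, v j⟫ = 1 := by
    intro j; simpa using orthonormal_iff_ite.mp v.orthonormal j j
  have hP : ∀ j, Matrix.toEuclideanLin ((List.ofFn x).prod) (v j)
      = (∏ i, (μx j i : ℂ)) • v j :=
    fun j => prod_eigen' x (v j) (fun i => (μx j i : ℂ)) (fun i => hveig i j)
  have hQw : ∀ m, Matrix.toEuclideanLin ((List.ofFn y).prod) (w m)
      = (∏ i, (μy m i : ℂ)) • w m :=
    fun m => prod_eigen' y (w m) (fun i => (μy m i : ℂ)) (fun i => hweig i m)
  -- trace of the x-product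
  have htrx : ((List.ofFn x).prod).trace = ∑ j, ∏ i, (μx j i : ℂ) := by
    rw [trace_eq_sum_inner' _ v]
    apply Finset.sum_congr rfl
    intro j _
    rw [hP j, inner_smul_right, hvnorm j, mul_one]
  -- coefficients of v j in the w basis
  set c : Fin n → Fin n → ℂ := fun j m => ⟪w m, v j⟫ with hc
  set p : Fin n → Fin n → ℝ := fun j m => Complex.normSq (c j m) with hp
  have hp0 : ∀ j m, 0 ≤ p j m := fun j m => Complex.normSq_nonneg _
  have hsumrepr : ∀ j, ∑ m, c j m • w m = v j := by
    intro j
    have := w.sum_repr (v j)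
    simp_rw [w.repr_apply_apply] at this
    exact this
  -- trace of the y-product
  have htry : ((List.ofFn y).prod).trace
      = ∑ j, ∑ m, ((p j m : ℂ) * ∏ i, (μy m i : ℂ)) := by
    rw [trace_eq_sum_inner' _ v]
    apply Finset.sum_congr rfl
    intro j _
    conv_lhs => rw [← hsumrepr j]
    rw [inner_sum_eigen w (c j) (fun m => ∏ i, (μy m i : ℂ)) _ hQw]
    apply Finset.sum_congr rfl
    intro m _
    have : starRingEnd ℂ (c j m) * (c j m * (∏ i, (μy m i : ℂ)))
        = (c j m * starRingEnd ℂ (c j m)) * (∏ i, (μy m i : ℂ)) := by ring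
    rw [this, Complex.mul_conj]
  -- Parseval
  have hp1 : ∀ j, ∑ m, p j m = 1 := by
    intro j
    have hid : ∀ m, (LinearMap.id : EuclideanSpace ℂ (Fin n) →ₗ[ℂ] EuclideanSpace ℂ (Fin n)) (w m)
        = (1 : ℂ) • w m := by intro m; simp
    have h1 := inner_sum_eigen w (c j) (fun _ => (1:ℂ)) LinearMap.id hid
    rw [LinearMap.id_apply, hsumrepr j, hvnorm j] at h1
    have h2 : ∑ m, starRingEnd ℂ (c j m) * (c j m * 1) = ∑ m, ((p j m : ℂ)) := by
      apply Finset.sum_congr rfl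
      intro m _
      have : starRingEnd ℂ (c j m) * (c j m * 1) = c j m * starRingEnd ℂ (c j m) := by ring
      rw [this, Complex.mul_conj]
    rw [h2] at h1
    have : ((1:ℝ) : ℂ) = ((∑ m, p j m : ℝ) : ℂ) := by push_cast; exact h1
    exact_mod_cast this.symm
  -- the key condition, via test vectors
  have hcond : ∀ j i (s : Fin n → ℝ),
      μx j i * (∑ m, p j m * s m) ^ 2 ≤ ∑ m, p j m * μy m i * s m ^ 2 := by
    intro j i s
    set t : EuclideanSpace ℂ (Fin n) := ∑ m, ((s m : ℂ) * c j m) • w m with ht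
    have h1 : ⟪t, Matrix.toEuclideanLin (y i) t⟫
        = ((∑ m, p j m * μy m i * s m ^ 2 : ℝ) : ℂ) := by
      rw [inner_sum_eigen w _ (fun m => (μy m i : ℂ)) _ (fun m => hweig i m)]
      push_cast
      apply Finset.sum_congr rfl
      intro m _
      have : starRingEnd ℂ ((s m : ℂ) * c j m) * ((s m : ℂ) * c j m * (μy m i : ℂ))
          = (c j m * starRingEnd ℂ (c j m)) * (μy m i : ℂ) * (s m : ℂ) ^ 2 := by
        rw [_root_.map_mul, Complex.conj_ofReal]; ring
      rw [this, Complex.mul_conj]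
    have hτ : ⟪v j, t⟫ = ((∑ m, p j m * s m : ℝ) : ℂ) := by
      rw [inner_sum]
      push_cast
      apply Finset.sum_congr rfl
      intro m _
      rw [inner_smul_right, ← inner_conj_symm (v j) (w m)]
      have : (s m : ℂ) * c j m * starRingEnd ℂ (c j m)
          = (c j m * starRingEnd ℂ (c j m)) * (s m : ℂ) := by ring
      rw [this, Complex.mul_conj]
    have h2 := eigen_cs (hx i) t (hvnorm j) (hveig i j)
    have h3 : ⟪t, Matrix.toEuclideanLin (x i) t⟫ ≤ ⟪t, Matrix.toEuclideanLin (y i) t⟫ := by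
      have h4 := psd_inner_nonneg (hle i) t
      have h5 : Matrix.toEuclideanLin (y i - x i)
          = Matrix.toEuclideanLin (y i) - Matrix.toEuclideanLin (x i) := map_sub _ _ _
      rw [h5, LinearMap.sub_apply, inner_sub_right] at h4
      exact sub_nonneg.mp h4
    have h6 : ((μx j i * (∑ m, p j m * s m) ^ 2 : ℝ) : ℂ)
        ≤ ((∑ m, p j m * μy m i * s m ^ 2 : ℝ) : ℂ) := by
      calc ((μx j i * (∑ m, p j m * s m) ^ 2 : ℝ) : ℂ)
          = (μx j i : ℂ) * (⟪v j, t⟫ * starRingEnd ℂ ⟪v j, t⟫) := by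
            rw [hτ, Complex.conj_ofReal]; push_cast; ring
      _ ≤ ⟪t, Matrix.toEuclideanLin (x i) t⟫ := h2
      _ ≤ ⟪t, Matrix.toEuclideanLin (y i) t⟫ := h3
      _ = _ := h1
    exact_mod_cast h6
  -- apply the scalar core lemma for each j
  have hmain : ∀ j, ∏ i, μx j i ≤ ∑ m, p j m * ∏ i, μy m i := by
    intro j
    exact core_scalar (p j) (fun i m => μy m i) (fun i => μx j i)
      (hp0 j) (hp1 j) (fun i m => hμy0 m i) (fun i => hμx0 j i)
      (fun i s => hcond j i s)
  rw [htrx, htry]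
  have final := Finset.sum_le_sum (fun j (_ : j ∈ Finset.univ) => hmain j)
  exact_mod_cast final
end
end

section
/- For positive definite matrices x, y the geometric mean x # y = x^{1/2}(x^{-1/2} y x^{-1/2})^{1/2} x^{1/2} is monotone: if 0 < x₁ ≤ x₂ and 0 < y₁ ≤ y₂ then x₁ # y₁ ≤ x₂ # y₂. -/
open Matrix
open scoped ComplexOrder Classical

/-- The positive semidefinite square root (junk value `0` if not PSD). -/

noncomputable def msqrt {n : ℕ} (A : Matrix (Fin n) (Fin n) ℂ) :
    Matrix (Fin n) (Fin n) ℂ :=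
  if h : A.PosSemidef then h.1.eigenvectorUnitary.1 * diagonal ((↑) ∘ (Real.sqrt ∘ h.1.eigenvalues)) *
    (star h.1.eigenvectorUnitary : Matrix (Fin n) (Fin n) ℂ) else 0

/-- The matrix geometric mean `x # y = x^{1/2} (x^{-1/2} y x^{-1/2})^{1/2} x^{1/2}`. -/
noncomputable def geoMean {n : ℕ} (x y : Matrix (Fin n) (Fin n) ℂ) :
    Matrix (Fin n) (Fin n) ℂ :=
  msqrt x * msqrt ((msqrt x)⁻¹ * y * (msqrt x)⁻¹) * msqrt x

/-!
Write `s = x^{1/2}`, so that `x # y = s (s⁻¹ y s⁻¹)^{1/2} s`. Congruence by a self-adjoint matrix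
preserves the Loewner order and the square root is operator monotone, so `x # y` is monotone in `y`.
Monotonicity in `x` then follows from the symmetry `x # y = y # x`: for positive definite `x`,
`x # y` is the unique positive semidefinite solution `z` of the Riccati equation `z x⁻¹ z = y`
(conjugating by `s⁻¹` turns it into `(s⁻¹ z s⁻¹)² = s⁻¹ y s⁻¹`), and `y # x` solves it too.
-/

open scoped MatrixOrder Matrix.Norms.L2Operator

section

variable {𝕜 ι : Type*} [RCLike 𝕜] [Fintype ι] [DecidableEq ι]

theorem isSelfAdjoint_inv_sqrt (x : Matrix ι ι 𝕜) : IsSelfAdjoint (CFC.sqrt x)⁻¹ :=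
  (CFC.sqrt_nonneg x).isSelfAdjoint.isHermitian.inv

theorem isUnit_det_sqrt {x : Matrix ι ι 𝕜} (hx : x.PosDef) : IsUnit (CFC.sqrt x).det :=
  (isUnit_iff_isUnit_det _).mp ((CFC.isUnit_sqrt_iff x hx.posSemidef.nonneg).mpr hx.isUnit)

theorem inv_eq_inv_sqrt_mul_inv_sqrt {x : Matrix ι ι 𝕜} (hx : 0 ≤ x) :
    x⁻¹ = (CFC.sqrt x)⁻¹ * (CFC.sqrt x)⁻¹ := by
  conv_lhs => rw [← CFC.sqrt_mul_sqrt_self x]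
  rw [Matrix.mul_inv_rev]

end

variable {n : ℕ} {x y z : Matrix (Fin n) (Fin n) ℂ}

-- Both sides are `0` off the positive semidefinite cone.
theorem msqrt_eq_sqrt (A : Matrix (Fin n) (Fin n) ℂ) : msqrt A = CFC.sqrt A := by
  by_cases hA : A.PosSemidef
  · rw [msqrt, dif_pos hA, CFC.sqrt_eq_cfc, cfc_nnreal_eq_real _ A, hA.1.cfc_eq]
    simp [IsHermitian.cfc, Function.comp_def, max_eq_left (hA.eigenvalues_nonneg _)]
  · rw [msqrt, dif_neg hA, CFC.sqrt_eq_cfc, cfc_apply_of_not_predicate]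
    rwa [nonneg_iff_posSemidef]

theorem geoMean_eq (x y : Matrix (Fin n) (Fin n) ℂ) :
    geoMean x y = CFC.sqrt x * CFC.sqrt ((CFC.sqrt x)⁻¹ * y * (CFC.sqrt x)⁻¹) * CFC.sqrt x := by
  simp only [geoMean, msqrt_eq_sqrt]

theorem geoMean_nonneg (x y : Matrix (Fin n) (Fin n) ℂ) : 0 ≤ geoMean x y := by
  rw [geoMean_eq]
  exact conjugate_nonneg_of_nonneg (CFC.sqrt_nonneg _) (CFC.sqrt_nonneg x)

theorem geoMean_mono_right (x : Matrix (Fin n) (Fin n) ℂ) : Monotone (geoMean x) := by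
  intro y₁ y₂ h
  rw [geoMean_eq, geoMean_eq]
  exact (CFC.sqrt_nonneg x).isSelfAdjoint.conjugate_le_conjugate
    (CFC.sqrt_le_sqrt _ _ ((isSelfAdjoint_inv_sqrt x).conjugate_le_conjugate h))

theorem geoMean_mul_inv_mul_geoMean (hx : x.PosDef) (hy : 0 ≤ y) :
    geoMean x y * x⁻¹ * geoMean x y = y := by
  rw [geoMean_eq, inv_eq_inv_sqrt_mul_inv_sqrt hx.posSemidef.nonneg]
  set s := CFC.sqrt x
  set w := CFC.sqrt (s⁻¹ * y * s⁻¹)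
  have hs : IsUnit s.det := isUnit_det_sqrt hx
  have hw : w * w = s⁻¹ * y * s⁻¹ :=
    CFC.sqrt_mul_sqrt_self _ ((isSelfAdjoint_inv_sqrt x).conjugate_nonneg hy)
  calc s * w * s * (s⁻¹ * s⁻¹) * (s * w * s) = s * (w * w) * s := by
        simp only [Matrix.mul_assoc, mul_nonsing_inv_cancel_left _ _ hs,
          nonsing_inv_mul_cancel_left _ _ hs]
    _ = y := by
        simp only [hw, Matrix.mul_assoc, mul_nonsing_inv_cancel_left _ _ hs, nonsing_inv_mul _ hs,
          Matrix.mul_one]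

theorem geoMean_eq_of_mul_inv_mul (hx : x.PosDef) (hz : 0 ≤ z) (h : z * x⁻¹ * z = y) :
    geoMean x y = z := by
  have hy : 0 ≤ y := h ▸ hz.isSelfAdjoint.conjugate_nonneg hx.inv.posSemidef.nonneg
  rw [geoMean_eq]
  set s := CFC.sqrt x
  have hs : IsUnit s.det := isUnit_det_sqrt hx
  have hu : CFC.sqrt (s⁻¹ * y * s⁻¹) = s⁻¹ * z * s⁻¹ := by
    rw [CFC.sqrt_eq_iff _ _ ((isSelfAdjoint_inv_sqrt x).conjugate_nonneg hy)
      ((isSelfAdjoint_inv_sqrt x).conjugate_nonneg hz), ← h,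
      inv_eq_inv_sqrt_mul_inv_sqrt hx.posSemidef.nonneg]
    simp only [Matrix.mul_assoc]
  rw [hu]
  simp only [Matrix.mul_assoc, mul_nonsing_inv_cancel_left _ _ hs, nonsing_inv_mul _ hs,
    Matrix.mul_one]

theorem geoMean_comm (hx : x.PosDef) (hy : y.PosDef) : geoMean x y = geoMean y x := by
  set g := geoMean y x
  have hg : g * y⁻¹ * g = x := geoMean_mul_inv_mul_geoMean hy hx.posSemidef.nonneg
  have hg_det : IsUnit g.det := by
    have hx_det := (isUnit_iff_isUnit_det x).mp hx.isUnit
    rw [← hg, det_mul, det_mul] at hx_det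
    exact isUnit_of_mul_isUnit_right hx_det
  refine geoMean_eq_of_mul_inv_mul hx (geoMean_nonneg y x) ?_
  rw [← hg, Matrix.mul_inv_rev, Matrix.mul_inv_rev,
    nonsing_inv_nonsing_inv _ ((isUnit_iff_isUnit_det y).mp hy.isUnit)]
  simp only [Matrix.mul_assoc, mul_nonsing_inv_cancel_left _ _ hg_det, nonsing_inv_mul _ hg_det,
    Matrix.mul_one]

theorem geoMean_mono_general (n : ℕ) (x₁ x₂ y₁ y₂ : Matrix (Fin n) (Fin n) ℂ)
    (hx₁ : x₁.PosDef) (hx₂ : x₂.PosDef) (hy₂ : y₂.PosDef)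
    (hx : (x₂ - x₁).PosSemidef) (hy : (y₂ - y₁).PosSemidef) :
    (geoMean x₂ y₂ - geoMean x₁ y₁).PosSemidef :=
  -- under `MatrixOrder`, `A ≤ B` unfolds to `(B - A).PosSemidef` (`Matrix.le_iff`)
  calc geoMean x₁ y₁ ≤ geoMean x₁ y₂ := geoMean_mono_right x₁ hy
    _ = geoMean y₂ x₁ := geoMean_comm hx₁ hy₂
    _ ≤ geoMean y₂ x₂ := geoMean_mono_right y₂ hx
    _ = geoMean x₂ y₂ := geoMean_comm hy₂ hx₂

/-- Monotonicity of the geometric mean: if `0 < x₁ ≤ x₂` and `0 < y₁ ≤ y₂`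
(Loewner order) then `x₁ # y₁ ≤ x₂ # y₂`. -/
theorem geoMean_mono (n : ℕ) (x₁ x₂ y₁ y₂ : Matrix (Fin n) (Fin n) ℂ)
    (hx₁ : x₁.PosDef) (hx₂ : x₂.PosDef) (hy₁ : y₁.PosDef) (hy₂ : y₂.PosDef)
    (hx : (x₂ - x₁).PosSemidef) (hy : (y₂ - y₁).PosSemidef) :
    (geoMean x₂ y₂ - geoMean x₁ y₁).PosSemidef :=
  geoMean_mono_general n x₁ x₂ y₁ y₂ hx₁ hx₂ hy₂ hx hy
end

section
/- Let x₁,...,xₖ be mutually commuting positive semidefinite matrices and y₁,...,yₖ be mutually commuting positive semidefinite matrices with xᵢ ≤ yᵢ for each i. Then x₁^{1/2^{k-1}} ⋯ xₖ^{1/2^{k-1}} ≤ y₁^{1/2^{k-1}} ⋯ yₖ^{1/2^{k-1}} in the Loewner order. -/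
open Matrix
open scoped ComplexOrder

/-- The real power `A ^ p` of a Hermitian matrix, via the functional calculus
(junk value `0` if `A` is not Hermitian). -/
noncomputable def hpow {n : ℕ} (A : Matrix (Fin n) (Fin n) ℂ) (p : ℝ) :
    Matrix (Fin n) (Fin n) ℂ :=
  if h : A.IsHermitian then h.cfc (fun t => t ^ p) else 0

set_option maxHeartbeats 1600000

namespace PR

open Polynomial

variable {n : Type*} [Fintype n] [DecidableEq n]

section sqrtport
open scoped MatrixOrder

/-- Square root of a PSD matrix (as in older Mathlib). -/
noncomputable def _root_.Matrix.PosSemidef.sqrt {A : Matrix n n ℂ} (hA : A.PosSemidef) :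
    Matrix n n ℂ := hA.1.cfc Real.sqrt

lemma _root_.Matrix.PosSemidef.sqrt_eq_CFC {A : Matrix n n ℂ} (hA : A.PosSemidef) :
    hA.sqrt = CFC.sqrt A := by
  have h0 : (0 : Matrix n n ℂ) ≤ A := hA.nonneg
  rw [CFC.sqrt_eq_real_sqrt A h0, cfcₙ_eq_cfc, hA.1.cfc_eq]
  rfl

lemma _root_.Matrix.PosSemidef.posSemidef_sqrt {A : Matrix n n ℂ} (hA : A.PosSemidef) :
    hA.sqrt.PosSemidef := by
  rw [hA.sqrt_eq_CFC]; exact Matrix.nonneg_iff_posSemidef.mp (CFC.sqrt_nonneg A)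

lemma _root_.Matrix.PosSemidef.sqrt_mul_self {A : Matrix n n ℂ} (hA : A.PosSemidef) :
    hA.sqrt * hA.sqrt = A := by
  rw [hA.sqrt_eq_CFC]; exact CFC.sqrt_mul_sqrt_self A hA.nonneg

lemma _root_.Matrix.PosSemidef.eq_sqrt_of_sq_eq {A B : Matrix n n ℂ} (hA : A.PosSemidef)
    (hB : B.PosSemidef) (hAB : A ^ 2 = B) : A = hB.sqrt := by
  rw [hB.sqrt_eq_CFC]
  exact (CFC.sqrt_unique (by rw [← pow_two]; exact hAB) hA.nonneg).symm

end sqrtport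


lemma sqrt_eq_cfc {A : Matrix n n ℂ} (hA : A.PosSemidef) : hA.sqrt = hA.1.cfc Real.sqrt := rfl

lemma cfc_mul {A : Matrix n n ℂ} (hA : A.IsHermitian) (f g : ℝ → ℝ) :
    hA.cfc f * hA.cfc g = hA.cfc (fun t => f t * g t) := by
  have hU : (star hA.eigenvectorUnitary : Matrix n n ℂ) * hA.eigenvectorUnitary = 1 :=
    Unitary.star_mul_self_of_mem (SetLike.coe_mem _)
  simp only [Matrix.IsHermitian.cfc, Unitary.conjStarAlgAut_apply, Matrix.mul_assoc]
  congr 1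
  rw [← Matrix.mul_assoc (star (hA.eigenvectorUnitary : Matrix n n ℂ)), hU, one_mul,
    ← Matrix.mul_assoc, diagonal_mul_diagonal]
  rw [show (fun i => ((RCLike.ofReal ∘ f ∘ hA.eigenvalues) i * (RCLike.ofReal ∘ g ∘ hA.eigenvalues) i : ℂ))
    = RCLike.ofReal ∘ (fun t => f t * g t) ∘ hA.eigenvalues from funext fun i => by simp]

lemma cfc_sub {A : Matrix n n ℂ} (hA : A.IsHermitian) (f g : ℝ → ℝ) :
    hA.cfc f - hA.cfc g = hA.cfc (fun t => f t - g t) := by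
  simp only [Matrix.IsHermitian.cfc, Unitary.conjStarAlgAut_apply]
  rw [← Matrix.sub_mul, ← Matrix.mul_sub, diagonal_sub]
  rw [show (fun i => ((RCLike.ofReal ∘ f ∘ hA.eigenvalues) i - (RCLike.ofReal ∘ g ∘ hA.eigenvalues) i : ℂ))
    = RCLike.ofReal ∘ (fun t => f t - g t) ∘ hA.eigenvalues from funext fun i => by simp]

lemma cfc_id {A : Matrix n n ℂ} (hA : A.IsHermitian) : hA.cfc (fun t => t) = A := by
  conv_rhs => rw [hA.spectral_theorem]
  rfl

lemma cfc_congr {A : Matrix n n ℂ} (hA : A.IsHermitian) {f g : ℝ → ℝ}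
    (h : ∀ i, f (hA.eigenvalues i) = g (hA.eigenvalues i)) : hA.cfc f = hA.cfc g := by
  simp only [Matrix.IsHermitian.cfc, Unitary.conjStarAlgAut_apply]
  rw [show (RCLike.ofReal ∘ f ∘ hA.eigenvalues : n → ℂ) = RCLike.ofReal ∘ g ∘ hA.eigenvalues
    from funext fun i => by simp [h i]]

lemma cfc_one {A : Matrix n n ℂ} (hA : A.IsHermitian) {f : ℝ → ℝ}
    (h : ∀ i, f (hA.eigenvalues i) = 1) : hA.cfc f = 1 := by
  have hU : (hA.eigenvectorUnitary : Matrix n n ℂ) * (star hA.eigenvectorUnitary : Matrix n n ℂ)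
      = 1 := Unitary.mul_star_self_of_mem (SetLike.coe_mem _)
  simp only [Matrix.IsHermitian.cfc, Unitary.conjStarAlgAut_apply]
  have hd : diagonal (RCLike.ofReal ∘ f ∘ hA.eigenvalues) = (1 : Matrix n n ℂ) := by
    rw [show (RCLike.ofReal ∘ f ∘ hA.eigenvalues : n → ℂ) = fun _ => 1
      from funext fun i => by simp [h i], diagonal_one]
  rw [hd, mul_one, hU]

lemma cfc_herm {A : Matrix n n ℂ} (hA : A.IsHermitian) (f : ℝ → ℝ) :
    (hA.cfc f).IsHermitian := by
  simp only [Matrix.IsHermitian.cfc, Unitary.conjStarAlgAut_apply]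
  rw [show (star hA.eigenvectorUnitary : Matrix n n ℂ)
    = (hA.eigenvectorUnitary : Matrix n n ℂ)ᴴ from rfl]
  exact isHermitian_mul_mul_conjTranspose _
    (isHermitian_diagonal_of_self_adjoint _ (funext fun i => by simp [Complex.conj_ofReal]))

lemma cfc_psd {A : Matrix n n ℂ} (hA : A.IsHermitian) (f : ℝ → ℝ)
    (h : ∀ i, 0 ≤ f (hA.eigenvalues i)) : (hA.cfc f).PosSemidef := by
  simp only [Matrix.IsHermitian.cfc, Unitary.conjStarAlgAut_apply]
  rw [show (star hA.eigenvectorUnitary : Matrix n n ℂ)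
    = (hA.eigenvectorUnitary : Matrix n n ℂ)ᴴ from rfl]
  apply Matrix.PosSemidef.mul_mul_conjTranspose_same
  apply Matrix.PosSemidef.diagonal
  intro i
  simp only [Function.comp_apply]
  rw [RCLike.le_iff_re_im]
  simpa using h i



/-- Conjugation by a unitary matrix as an `ℝ`-algebra homomorphism. -/
noncomputable def conjA (U : Matrix n n ℂ) (hU : U ∈ unitary (Matrix n n ℂ)) :
    Matrix n n ℂ →ₐ[ℝ] Matrix n n ℂ where
  toFun X := U * X * star U
  map_one' := by
    show U * 1 * star U = 1
    rw [mul_one, Unitary.mul_star_self_of_mem hU]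
  map_mul' X Y := by
    have h1 : star U * U = 1 := Unitary.star_mul_self_of_mem hU
    calc U * (X * Y) * star U = U * X * (star U * U) * Y * star U := by
          rw [h1]; noncomm_ring
      _ = U * X * star U * (U * Y * star U) := by noncomm_ring
  map_zero' := by simp
  map_add' X Y := by noncomm_ring
  commutes' r := by
    show U * (algebraMap ℝ (Matrix n n ℂ)) r * star U = (algebraMap ℝ (Matrix n n ℂ)) r
    rw [Algebra.algebraMap_eq_smul_one, mul_smul_comm, mul_one, smul_mul_assoc,
      Unitary.mul_star_self_of_mem hU]

lemma cfc_eq_aeval {A : Matrix n n ℂ} (hA : A.IsHermitian) (f : ℝ → ℝ) :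
    ∃ p : Polynomial ℝ, hA.cfc f = Polynomial.aeval A p := by
  classical
  set s : Finset ℝ := Finset.univ.image hA.eigenvalues with hs
  refine ⟨Lagrange.interpolate s id f, ?_⟩
  set p := Lagrange.interpolate s id f with hp
  have hmem : hA.eigenvectorUnitary.1 ∈ unitary (Matrix n n ℂ) := SetLike.coe_mem _
  have hAeq : A = conjA _ hmem (diagonal (RCLike.ofReal ∘ hA.eigenvalues)) :=
    hA.spectral_theorem
  have heval : ∀ i : n, p.eval (hA.eigenvalues i) = f (hA.eigenvalues i) := fun i =>
    Lagrange.eval_interpolate_at_node (r := f) (Set.injOn_id _)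
      (Finset.mem_image_of_mem _ (Finset.mem_univ i))
  conv_rhs => rw [hAeq, Polynomial.aeval_algHom_apply]
  have hdiag : (Polynomial.aeval (diagonal (RCLike.ofReal ∘ hA.eigenvalues) : Matrix n n ℂ) p)
      = diagonal (RCLike.ofReal ∘ f ∘ hA.eigenvalues) := by
    rw [show (diagonal (RCLike.ofReal ∘ hA.eigenvalues) : Matrix n n ℂ)
      = diagonalAlgHom ℝ (RCLike.ofReal ∘ hA.eigenvalues) from rfl]
    rw [Polynomial.aeval_algHom_apply]
    have : (Polynomial.aeval (RCLike.ofReal ∘ hA.eigenvalues : n → ℂ) p)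
        = RCLike.ofReal ∘ f ∘ hA.eigenvalues := by
      funext i
      have : (Polynomial.aeval (RCLike.ofReal ∘ hA.eigenvalues : n → ℂ) p) i
          = Polynomial.aeval ((RCLike.ofReal ∘ hA.eigenvalues : n → ℂ) i) p :=
        (Polynomial.aeval_algHom_apply (Pi.evalAlgHom ℝ (fun _ => ℂ) i) _ p).symm
      rw [this]
      simp only [Function.comp_apply]
      rw [show (RCLike.ofReal (hA.eigenvalues i) : ℂ) = algebraMap ℝ ℂ (hA.eigenvalues i) from rfl,
        Polynomial.aeval_algebraMap_apply_eq_algebraMap_eval, heval i]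
    rw [this]
    rfl
  rw [hdiag]
  rfl

lemma commute_cfc {A B : Matrix n n ℂ} (hA : A.IsHermitian) (f : ℝ → ℝ)
    (h : Commute A B) : Commute (hA.cfc f) B := by
  obtain ⟨p, hp⟩ := cfc_eq_aeval hA f
  rw [hp, Polynomial.aeval_eq_sum_range]
  exact Commute.sum_left _ _ _ fun i _ => (h.pow_left i).smul_left _



lemma nonneg_complex_eq_re {c : ℂ} (hc : 0 ≤ c) : c = (c.re : ℂ) := by
  rw [Complex.le_def] at hc
  obtain ⟨-, him⟩ := hc
  simp at him
  exact (Complex.re_add_im c) ▸ by rw [← him]; simp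

lemma smul_nonneg_cancel {t : ℝ} {c : ℂ} (hc : 0 ≤ c) (h : 0 ≤ (t : ℂ) * c) (ht : t < 0) :
    c = 0 := by
  rw [nonneg_complex_eq_re hc] at h ⊢
  rw [Complex.le_def] at h hc
  simp only [Complex.zero_re, Complex.zero_im, ← Complex.ofReal_mul, Complex.ofReal_re] at h hc
  have : c.re = 0 := le_antisymm (nonpos_of_mul_nonneg_right h.1 ht) hc.1
  simp [this]

lemma add_eq_zero_of_nonneg {c d : ℂ} (hc : 0 ≤ c) (hd : 0 ≤ d) (h : c + d = 0) :
    c = 0 ∧ d = 0 := by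
  constructor
  · exact le_antisymm (by calc c ≤ c + d := le_add_of_nonneg_right hd
                            _ = 0 := h) hc
  · exact le_antisymm (by calc d ≤ c + d := le_add_of_nonneg_left hc
                            _ = 0 := h) hd

/-- A Hermitian matrix all of whose eigenvalues (witnessed by eigenvector equations)
are nonnegative is PSD. -/
lemma herm_psd_of_eigen {S : Matrix n n ℂ} (hS : S.IsHermitian)
    (h : ∀ (t : ℝ) (v : n → ℂ), v ≠ 0 → S *ᵥ v = (t : ℂ) • v → 0 ≤ t) : S.PosSemidef := by
  apply hS.posSemidef_iff_eigenvalues_nonneg.mpr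
  intro i
  refine h _ (hS.eigenvectorBasis i) ?_ ?_
  · have := hS.eigenvectorBasis.orthonormal.ne_zero i
    intro hzero
    apply this
    ext j
    exact congrFun hzero j
  · have h2 := hS.mulVec_eigenvectorBasis i
    refine h2.trans ?_
    ext j
    simp

lemma conj_herm_psd {P M : Matrix n n ℂ} (hP : P.PosSemidef) (hM : M.IsHermitian) :
    (M * P * M).PosSemidef := by
  have := hP.mul_mul_conjTranspose_same M
  rwa [hM.eq] at this

/-- Loewner–Heinz: monotonicity of the matrix square root. -/
lemma sqrt_monotone {A B : Matrix n n ℂ} (hA : A.PosSemidef) (hB : B.PosSemidef)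
    (hAB : (B - A).PosSemidef) : (hB.sqrt - hA.sqrt).PosSemidef := by
  set a := hA.sqrt with ha
  set b := hB.sqrt with hb
  have haP : a.PosSemidef := hA.posSemidef_sqrt
  have hbP : b.PosSemidef := hB.posSemidef_sqrt
  have hherm : (b - a).IsHermitian := hbP.1.sub haP.1
  apply herm_psd_of_eigen hherm
  intro t v hv hev
  by_contra hlt
  push_neg at hlt
  have key : B - A = b * (b - a) + (b - a) * a := by
    rw [Matrix.mul_sub, Matrix.sub_mul, hB.sqrt_mul_self, hA.sqrt_mul_self, sub_add_sub_cancel]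
  have h1 : (0 : ℂ) ≤ star v ⬝ᵥ ((B - A) *ᵥ v) := hAB.dotProduct_mulVec_nonneg v
  have hterm1 : star v ⬝ᵥ ((b * (b - a)) *ᵥ v) = (t : ℂ) * (star v ⬝ᵥ b *ᵥ v) := by
    rw [← Matrix.mulVec_mulVec, hev, Matrix.mulVec_smul, dotProduct_smul]
    simp [mul_comm]
  have hterm2 : star v ⬝ᵥ (((b - a) * a) *ᵥ v) = (t : ℂ) * (star v ⬝ᵥ a *ᵥ v) := by
    rw [← Matrix.mulVec_mulVec, Matrix.dotProduct_mulVec]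
    have : star v ᵥ* (b - a) = star ((b - a) *ᵥ v) := by
      rw [Matrix.star_mulVec, hherm.eq]
    rw [this, hev, star_smul, smul_dotProduct]
    simp [Matrix.dotProduct_mulVec, smul_eq_mul]
  rw [key, Matrix.add_mulVec, dotProduct_add, hterm1, hterm2, ← mul_add] at h1
  have hbnn : (0:ℂ) ≤ star v ⬝ᵥ b *ᵥ v := hbP.dotProduct_mulVec_nonneg v
  have hann : (0:ℂ) ≤ star v ⬝ᵥ a *ᵥ v := haP.dotProduct_mulVec_nonneg v
  have hc0 := smul_nonneg_cancel (add_nonneg hbnn hann) h1 hlt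
  obtain ⟨hb0, ha0⟩ := add_eq_zero_of_nonneg hbnn hann hc0
  have hbv : b *ᵥ v = 0 := (hbP.dotProduct_mulVec_zero_iff v).mp hb0
  have hav : a *ᵥ v = 0 := (haP.dotProduct_mulVec_zero_iff v).mp ha0
  have : (t : ℂ) • v = 0 := by
    rw [← hev, Matrix.sub_mulVec, hbv, hav, sub_zero]
  rcases smul_eq_zero.mp this with h' | h'
  · exact absurd (Complex.ofReal_eq_zero.mp h') (ne_of_lt hlt)
  · exact hv h'

/-- If `1 - T Tᴴ` is PSD then so is `1 - Tᴴ T`. -/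
lemma one_sub_conjTranspose_mul_self {T : Matrix n n ℂ} (h : (1 - T * Tᴴ).PosSemidef) :
    (1 - Tᴴ * T).PosSemidef := by
  have hherm : (1 - Tᴴ * T).IsHermitian :=
    isHermitian_one.sub (isHermitian_conjTranspose_mul_self T)
  apply herm_psd_of_eigen hherm
  intro t v hv hev
  by_contra hlt
  push_neg at hlt
  have hTv : (Tᴴ * T) *ᵥ v = ((1 - t : ℝ) : ℂ) • v := by
    have : (Tᴴ * T) *ᵥ v = v - (t : ℂ) • v := by
      rw [← hev]
      rw [Matrix.sub_mulVec, Matrix.one_mulVec]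
      abel
    rw [this]
    ext j
    push_cast
    simp [sub_smul, sub_mul]
  set u := T *ᵥ v with hu
  have hune : u ≠ 0 := by
    intro h0
    have : (Tᴴ * T) *ᵥ v = 0 := by rw [← Matrix.mulVec_mulVec, ← hu, h0, Matrix.mulVec_zero]
    rw [hTv] at this
    rcases smul_eq_zero.mp this with h' | h'
    · have : (1 : ℝ) - t = 0 := by exact_mod_cast h'
      linarith
    · exact hv h'
  have hTTu : (T * Tᴴ) *ᵥ u = ((1 - t : ℝ) : ℂ) • u := by
    have e1 : (T * Tᴴ) *ᵥ u = T *ᵥ ((Tᴴ * T) *ᵥ v) := by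
      rw [hu, Matrix.mulVec_mulVec, Matrix.mulVec_mulVec, Matrix.mul_assoc]
    rw [e1, hTv, Matrix.mulVec_smul]
  have h2 : (0:ℂ) ≤ star u ⬝ᵥ ((1 - T * Tᴴ) *ᵥ u) := h.dotProduct_mulVec_nonneg u
  have : star u ⬝ᵥ ((1 - T * Tᴴ) *ᵥ u) = (t : ℂ) * (star u ⬝ᵥ u) := by
    rw [Matrix.sub_mulVec, Matrix.one_mulVec, hTTu, dotProduct_sub,
      dotProduct_smul]
    push_cast
    ring_nf
  rw [this] at h2
  have := smul_nonneg_cancel (dotProduct_star_self_nonneg u) h2 hlt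
  exact hune (dotProduct_star_self_eq_zero.mp this)

lemma commute_sqrt {A B : Matrix n n ℂ} (hA : A.PosSemidef) (h : Commute A B) :
    Commute hA.sqrt B := by
  rw [sqrt_eq_cfc hA]; exact commute_cfc hA.1 _ h

lemma psd_mul_of_commute {P Q : Matrix n n ℂ} (hP : P.PosSemidef) (hQ : Q.PosSemidef)
    (h : Commute P Q) : (P * Q).PosSemidef := by
  have hsQ : Commute hP.sqrt Q := commute_sqrt hP h
  have : P * Q = hP.sqrt * Q * hP.sqrt := by
    rw [mul_assoc, ← hsQ.eq, ← mul_assoc, hP.sqrt_mul_self]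
  rw [this]
  exact conj_herm_psd hQ hP.posSemidef_sqrt.1

lemma sqrt_mul_sqrt_psd {P Q : Matrix n n ℂ} (hP : P.PosSemidef) (hQ : Q.PosSemidef)
    (h : Commute P Q) : (hP.sqrt * hQ.sqrt).PosSemidef :=
  psd_mul_of_commute hP.posSemidef_sqrt hQ.posSemidef_sqrt
    (commute_sqrt hP (commute_sqrt hQ h.symm).symm)

lemma sqrt_mul {P Q : Matrix n n ℂ} (hP : P.PosSemidef) (hQ : Q.PosSemidef)
    (h : Commute P Q) : (psd_mul_of_commute hP hQ h).sqrt = hP.sqrt * hQ.sqrt := by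
  symm
  apply Matrix.PosSemidef.eq_sqrt_of_sq_eq (sqrt_mul_sqrt_psd hP hQ h)
  have hc : Commute hP.sqrt hQ.sqrt := commute_sqrt hP (commute_sqrt hQ h.symm).symm
  rw [pow_two, mul_assoc, ← mul_assoc hQ.sqrt, ← hc.eq, mul_assoc, hQ.sqrt_mul_self,
    ← mul_assoc, hP.sqrt_mul_self]

/-- Core two-factor lemma, invertible case. -/
lemma core_inv {x z y w : Matrix n n ℂ}
    (hx : x.PosSemidef) (hz : z.PosSemidef) (hy : y.PosDef) (hw : w.PosSemidef)
    (hxz : Commute x z) (hyw : Commute y w)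
    (hxy : (y - x).PosSemidef) (hzw : (w - z).PosSemidef) :
    (hy.posSemidef.sqrt * hw.sqrt - hx.sqrt * hz.sqrt).PosSemidef := by
  set a := hx.sqrt with ha
  set c := hz.sqrt with hc
  set s := hy.posSemidef.sqrt with hs
  set d := hw.sqrt with hd
  have haP := hx.posSemidef_sqrt
  have hcP := hz.posSemidef_sqrt
  have hsP := hy.posSemidef.posSemidef_sqrt
  have hdP := hw.posSemidef_sqrt
  set r : Matrix n n ℂ := hy.1.cfc (fun t => (Real.sqrt t)⁻¹) with hr
  have hrherm : r.IsHermitian := cfc_herm _ _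
  have hrpsd : r.PosSemidef := cfc_psd _ _ fun i => by positivity
  have heig : ∀ i, 0 < hy.1.eigenvalues i := hy.eigenvalues_pos
  have hsr : s * r = 1 := by
    rw [hs, sqrt_eq_cfc, cfc_mul]
    exact cfc_one _ fun i => mul_inv_cancel₀ (Real.sqrt_ne_zero'.mpr (heig i))
  have hrs : r * s = 1 := by
    rw [hs, sqrt_eq_cfc, cfc_mul]
    exact cfc_one _ fun i => inv_mul_cancel₀ (Real.sqrt_ne_zero'.mpr (heig i))
  have hryr : r * y * r = 1 := by
    conv_lhs => rw [← cfc_id hy.1]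
    rw [cfc_mul, cfc_mul]
    refine cfc_one _ fun i => ?_
    have h0 := (heig i).le
    rw [← Real.mul_self_sqrt h0]
    have hne : Real.sqrt (hy.1.eigenvalues i) ≠ 0 := Real.sqrt_ne_zero'.mpr (heig i)
    rw [Real.sqrt_mul_self (Real.sqrt_nonneg _)]
    field_simp
  -- Step A : a * (r * r) * a ≤ 1
  have hstepA : (1 - a * (r * r) * a).PosSemidef := by
    have h1 : (1 - (r * a) * (r * a)ᴴ).PosSemidef := by
      have hconj : (r * (y - x) * r).PosSemidef := conj_herm_psd hxy hrherm
      have : r * (y - x) * r = 1 - (r * a) * (r * a)ᴴ := by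
        rw [Matrix.mul_sub, Matrix.sub_mul, hryr]
        rw [sub_right_inj]
        rw [conjTranspose_mul, hrherm.eq, haP.1.eq]
        calc r * x * r = r * (a * a) * r := by rw [hx.sqrt_mul_self]
          _ = r * a * (a * r) := by simp only [Matrix.mul_assoc]
      rwa [this] at hconj
    have h2 := one_sub_conjTranspose_mul_self h1
    have : (r * a)ᴴ * (r * a) = a * (r * r) * a := by
      rw [conjTranspose_mul, hrherm.eq, haP.1.eq]
      simp only [Matrix.mul_assoc]
      rfl
    rwa [this] at h2
  -- Step B : (a*c) * (r*r) * (a*c) ≤ w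
  have hac : Commute a c := commute_sqrt hx (commute_sqrt hz hxz.symm).symm
  have hstepB : (w - (a * c) * (r * r) * (a * c)).PosSemidef := by
    have h3 : (c * (1 - a * (r * r) * a) * c).PosSemidef := conj_herm_psd hstepA hcP.1
    have h4' : (a * c) * (r * r) * (a * c) = c * (a * (r * r) * a) * c := by
      nth_rewrite 1 [hac.eq]
      simp only [Matrix.mul_assoc]
    have h4 : c * (1 - a * (r * r) * a) * c = z - (a * c) * (r * r) * (a * c) := by
      rw [Matrix.mul_sub, Matrix.sub_mul, mul_one, hz.sqrt_mul_self, h4']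
    rw [h4] at h3
    have := hzw.add h3
    rwa [sub_add_sub_cancel] at this
  -- Step C & D & E
  set S := a * c with hS
  have hSherm : S.IsHermitian := by
    rw [Matrix.IsHermitian, hS, conjTranspose_mul, haP.1.eq, hcP.1.eq, hac.eq]
  set H := r * S * r with hH
  have hHherm : H.IsHermitian := by
    rw [Matrix.IsHermitian, hH, conjTranspose_mul, conjTranspose_mul, hrherm.eq, hSherm.eq]
    simp only [Matrix.mul_assoc]
  have hHH : H * H = r * (S * (r * r) * S) * r := by
    rw [hH]; simp only [Matrix.mul_assoc]
  have hHHpsd : (H * H).PosSemidef := by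
    have := posSemidef_conjTranspose_mul_self H
    rwa [hHherm.eq] at this
  have hrwr : (r * w * r).PosSemidef := conj_herm_psd hw hrherm
  have hstepC : (r * w * r - H * H).PosSemidef := by
    have := conj_herm_psd hstepB hrherm
    rw [Matrix.mul_sub, Matrix.sub_mul, ← hHH] at this
    exact this
  -- |H|
  set absH := hHherm.cfc (fun t => |t|) with habs
  have habspsd : absH.PosSemidef := cfc_psd _ _ fun i => abs_nonneg _
  have habssq : absH ^ 2 = H * H := by
    rw [pow_two, habs, cfc_mul]
    have : hHherm.cfc (fun t => |t| * |t|) = hHherm.cfc (fun t => t * t) :=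
      cfc_congr _ fun i => abs_mul_abs_self _
    rw [this, ← cfc_mul, cfc_id]
  have habs_eq : absH = hHHpsd.sqrt := Matrix.PosSemidef.eq_sqrt_of_sq_eq habspsd hHHpsd habssq
  have habs_ge : (absH - H).PosSemidef := by
    have hsub := cfc_sub hHherm (fun t => |t|) (fun t => t)
    rw [cfc_id hHherm] at hsub
    rw [habs, hsub]
    exact cfc_psd _ _ fun i => sub_nonneg.mpr (le_abs_self _)
  have hLH : (hrwr.sqrt - hHHpsd.sqrt).PosSemidef := sqrt_monotone hHHpsd hrwr hstepC
  have hHle : (hrwr.sqrt - H).PosSemidef := by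
    have := hLH.add habs_ge
    rwa [habs_eq, sub_add_sub_cancel] at this
  -- Step F : sqrt (r * w * r) = d * r
  have hrw : Commute r w := commute_cfc hy.1 _ hyw
  have hdr : Commute d r := commute_sqrt hw hrw.symm
  have hsqrt_rwr : hrwr.sqrt = d * r := by
    symm
    apply Matrix.PosSemidef.eq_sqrt_of_sq_eq (psd_mul_of_commute hdP hrpsd hdr)
    rw [pow_two]
    calc d * r * (d * r) = d * (r * d) * r := by simp only [Matrix.mul_assoc]
      _ = d * (d * r) * r := by rw [hdr.eq]
      _ = (d * d) * (r * r) := by simp only [Matrix.mul_assoc]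
      _ = w * (r * r) := by rw [hw.sqrt_mul_self]
      _ = r * w * r := by rw [hrw.eq]; simp only [Matrix.mul_assoc]
  -- Step G : conjugate by s
  have hSHS : s * H * s = S := by
    rw [hH]
    calc s * (r * S * r) * s = (s * r) * S * (r * s) := by simp only [Matrix.mul_assoc]
      _ = S := by rw [hsr, hrs, one_mul, mul_one]
  have hstepG : (s * (d * r) * s - S).PosSemidef := by
    have h5 := conj_herm_psd hHle hsP.1
    rw [Matrix.mul_sub, Matrix.sub_mul, hsqrt_rwr, hSHS] at h5
    exact h5
  have hsw : Commute s w := by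
    rw [hs, sqrt_eq_cfc]
    exact commute_cfc hy.1 _ hyw
  have hsd : Commute d s := commute_sqrt hw hsw.symm
  have hfinal : s * (d * r) * s = s * d := by
    calc s * (d * r) * s = (s * d) * (r * s) := by simp only [Matrix.mul_assoc]
      _ = s * d := by rw [hrs, mul_one]
  rwa [hfinal] at hstepG

lemma cfc_add {A : Matrix n n ℂ} (hA : A.IsHermitian) (f g : ℝ → ℝ) :
    hA.cfc f + hA.cfc g = hA.cfc (fun t => f t + g t) := by
  simp only [Matrix.IsHermitian.cfc, Unitary.conjStarAlgAut_apply]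
  rw [← Matrix.add_mul, ← Matrix.mul_add, diagonal_add]
  rw [show (fun i => ((RCLike.ofReal ∘ f ∘ hA.eigenvalues) i + (RCLike.ofReal ∘ g ∘ hA.eigenvalues) i : ℂ))
    = RCLike.ofReal ∘ (fun t => f t + g t) ∘ hA.eigenvalues from funext fun i => by simp]

lemma cfc_const {A : Matrix n n ℂ} (hA : A.IsHermitian) (c : ℝ) :
    hA.cfc (fun _ => c) = (c : ℂ) • 1 := by
  have hU : (hA.eigenvectorUnitary : Matrix n n ℂ) * (star hA.eigenvectorUnitary : Matrix n n ℂ)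
      = 1 := Unitary.mul_star_self_of_mem (SetLike.coe_mem _)
  simp only [Matrix.IsHermitian.cfc, Unitary.conjStarAlgAut_apply]
  rw [show (RCLike.ofReal ∘ (fun _ : ℝ => c) ∘ hA.eigenvalues : n → ℂ) = fun _ => (c : ℂ) from rfl,
    ← Matrix.smul_one_eq_diagonal, mul_smul_comm, smul_mul_assoc, mul_one, hU]

lemma smul_one_psd {ε : ℝ} (hε : 0 ≤ ε) : ((ε : ℂ) • (1 : Matrix n n ℂ)).PosSemidef := by
  rw [Matrix.smul_one_eq_diagonal]
  exact Matrix.PosSemidef.diagonal fun i => by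
    simpa using Complex.zero_le_real.mpr hε

lemma psd_add_smul_one_posDef {y : Matrix n n ℂ} (hy : y.PosSemidef) {ε : ℝ} (hε : 0 < ε) :
    (y + (ε : ℂ) • 1).PosDef := by
  refine Matrix.PosDef.of_dotProduct_mulVec_pos (hy.1.add (smul_one_psd hε.le).1) fun v hv => ?_
  rw [Matrix.add_mulVec, dotProduct_add]
  apply add_pos_of_nonneg_of_pos (hy.dotProduct_mulVec_nonneg v)
  rw [Matrix.smul_mulVec, Matrix.one_mulVec, dotProduct_smul]
  have hvv : 0 < star v ⬝ᵥ v := by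
    rcases lt_or_eq_of_le (dotProduct_star_self_nonneg v) with h | h
    · exact h
    · exact absurd (dotProduct_star_self_eq_zero.mp h.symm) hv
  exact smul_pos (Complex.zero_lt_real.mpr hε) hvv

/-- Core two-factor lemma (general PSD case), via perturbation and continuity. -/
lemma core {x z y w : Matrix n n ℂ}
    (hx : x.PosSemidef) (hz : z.PosSemidef) (hy : y.PosSemidef) (hw : w.PosSemidef)
    (hxz : Commute x z) (hyw : Commute y w)
    (hxy : (y - x).PosSemidef) (hzw : (w - z).PosSemidef) :
    (hy.sqrt * hw.sqrt - hx.sqrt * hz.sqrt).PosSemidef := by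
  classical
  -- the ε-perturbed square roots, as explicit continuous families
  set U : Matrix n n ℂ := (hy.1.eigenvectorUnitary : Matrix n n ℂ) with hU
  set V : Matrix n n ℂ := (hw.1.eigenvectorUnitary : Matrix n n ℂ) with hV
  set gy : ℝ → Matrix n n ℂ := fun ε =>
    U * diagonal (fun i => (Real.sqrt (hy.1.eigenvalues i + ε) : ℂ)) * star U with hgy
  set gw : ℝ → Matrix n n ℂ := fun ε =>
    V * diagonal (fun i => (Real.sqrt (hw.1.eigenvalues i + ε) : ℂ)) * star V with hgw
  have hgy_eq : ∀ ε : ℝ, gy ε = hy.1.cfc (fun t => Real.sqrt (t + ε)) := fun ε => rfl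
  have hgw_eq : ∀ ε : ℝ, gw ε = hw.1.cfc (fun t => Real.sqrt (t + ε)) := fun ε => rfl
  -- continuity
  have hUc : Continuous fun _ : ℝ => U := continuous_const
  have hgyc : Continuous gy := by
    apply Continuous.matrix_mul
    apply Continuous.matrix_mul hUc
    · apply Continuous.matrix_diagonal
      apply continuous_pi
      intro i
      have : Continuous fun ε : ℝ => Real.sqrt (hy.1.eigenvalues i + ε) :=
        Real.continuous_sqrt.comp (continuous_const.add continuous_id)
      exact Complex.continuous_ofReal.comp this
    · exact continuous_const
  have hgwc : Continuous gw := by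
    apply Continuous.matrix_mul
    apply Continuous.matrix_mul continuous_const
    · apply Continuous.matrix_diagonal
      apply continuous_pi
      intro i
      have : Continuous fun ε : ℝ => Real.sqrt (hw.1.eigenvalues i + ε) :=
        Real.continuous_sqrt.comp (continuous_const.add continuous_id)
      exact Complex.continuous_ofReal.comp this
    · exact continuous_const
  -- positivity for each ε > 0
  have hkey : ∀ ε : ℝ, 0 < ε → (gy ε * gw ε - hx.sqrt * hz.sqrt).PosSemidef := by
    intro ε hε
    have hyε : (y + (ε : ℂ) • 1).PosDef := psd_add_smul_one_posDef hy hε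
    have hwε : (w + (ε : ℂ) • 1).PosSemidef := hw.add (smul_one_psd hε.le)
    have hxyε : ((y + (ε : ℂ) • 1) - x).PosSemidef := by
      have := hxy.add (smul_one_psd hε.le)
      rwa [sub_add_eq_add_sub] at this
    have hzwε : ((w + (ε : ℂ) • 1) - z).PosSemidef := by
      have := hzw.add (smul_one_psd hε.le)
      rwa [sub_add_eq_add_sub] at this
    have hywε : Commute (y + (ε : ℂ) • 1) (w + (ε : ℂ) • 1) := by
      apply Commute.add_left
      · apply Commute.add_right hyw
        exact (Commute.one_right y).smul_right ε
      · apply Commute.add_right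
        · exact ((Commute.one_left w).smul_left ε)
        · exact ((Commute.one_left 1).smul_left ε).smul_right ε
    have hcore := core_inv hx hz hyε hwε hxz hywε hxyε hzwε
    -- identify the square roots
    have hsy : hyε.posSemidef.sqrt = gy ε := by
      symm
      apply Matrix.PosSemidef.eq_sqrt_of_sq_eq
      · rw [hgy_eq]
        exact cfc_psd _ _ fun i => Real.sqrt_nonneg _
      · rw [hgy_eq, pow_two, cfc_mul]
        have h1 : hy.1.cfc (fun t => Real.sqrt (t + ε) * Real.sqrt (t + ε))
            = hy.1.cfc (fun t => t + ε) := cfc_congr _ fun i =>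
          Real.mul_self_sqrt (by linarith [hy.eigenvalues_nonneg i, hε.le])
        rw [h1]
        have h2 := cfc_add hy.1 (fun t => t) (fun t => ε)
        rw [cfc_id, cfc_const] at h2
        exact h2.symm
    have hsw : hwε.sqrt = gw ε := by
      symm
      apply Matrix.PosSemidef.eq_sqrt_of_sq_eq
      · rw [hgw_eq]
        exact cfc_psd _ _ fun i => Real.sqrt_nonneg _
      · rw [hgw_eq, pow_two, cfc_mul]
        have h1 : hw.1.cfc (fun t => Real.sqrt (t + ε) * Real.sqrt (t + ε))
            = hw.1.cfc (fun t => t + ε) := cfc_congr _ fun i =>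
          Real.mul_self_sqrt (by linarith [hw.eigenvalues_nonneg i, hε.le])
        rw [h1]
        have h2 := cfc_add hw.1 (fun t => t) (fun t => ε)
        rw [cfc_id, cfc_const] at h2
        exact h2.symm
    rwa [hsy, hsw] at hcore
  -- Hermitian part of the limit
  have hherm : (hy.sqrt * hw.sqrt - hx.sqrt * hz.sqrt).IsHermitian := by
    have h1 : Commute hy.sqrt hw.sqrt :=
      commute_sqrt hy (commute_sqrt hw hyw.symm).symm
    have h2 : Commute hx.sqrt hz.sqrt :=
      commute_sqrt hx (commute_sqrt hz hxz.symm).symm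
    have e1 : (hy.sqrt * hw.sqrt).IsHermitian := by
      rw [Matrix.IsHermitian, conjTranspose_mul, hy.posSemidef_sqrt.1.eq,
        hw.posSemidef_sqrt.1.eq, h1.eq]
    have e2 : (hx.sqrt * hz.sqrt).IsHermitian := by
      rw [Matrix.IsHermitian, conjTranspose_mul, hx.posSemidef_sqrt.1.eq,
        hz.posSemidef_sqrt.1.eq, h2.eq]
    exact e1.sub e2
  -- limits at ε = 0
  have hgy0 : gy 0 = hy.sqrt := by
    rw [hgy_eq, sqrt_eq_cfc]
    exact cfc_congr _ fun i => by simp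
  have hgw0 : gw 0 = hw.sqrt := by
    rw [hgw_eq, sqrt_eq_cfc]
    exact cfc_congr _ fun i => by simp
  refine Matrix.PosSemidef.of_dotProduct_mulVec_nonneg hherm fun v => ?_
  set F : ℝ → ℂ := fun ε => star v ⬝ᵥ ((gy ε * gw ε - hx.sqrt * hz.sqrt) *ᵥ v) with hF
  have hFc : Continuous F := by
    apply Continuous.dotProduct continuous_const
    apply Continuous.matrix_mulVec _ continuous_const
    exact (hgyc.matrix_mul hgwc).sub continuous_const
  have hFnonneg : ∀ ε : ℝ, 0 < ε → 0 ≤ F ε := fun ε hε => (hkey ε hε).dotProduct_mulVec_nonneg v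
  have hF0 : F 0 = star v ⬝ᵥ ((hy.sqrt * hw.sqrt - hx.sqrt * hz.sqrt) *ᵥ v) := by
    rw [hF]
    simp only [hgy0, hgw0]
  rw [← hF0]
  have htend : Filter.Tendsto F (nhdsWithin 0 (Set.Ioi 0)) (nhds (F 0)) :=
    (hFc.tendsto 0).mono_left nhdsWithin_le_nhds
  have hre : 0 ≤ (F 0).re := by
    have : Filter.Tendsto (fun ε => (F ε).re) (nhdsWithin 0 (Set.Ioi 0)) (nhds (F 0).re) :=
      (Complex.continuous_re.tendsto _).comp htend
    refine ge_of_tendsto this ?_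
    filter_upwards [self_mem_nhdsWithin] with ε hε
    exact (Complex.le_def.mp (hFnonneg ε hε)).1
  have him : (F 0).im = 0 := by
    have h1 : Filter.Tendsto (fun ε => (F ε).im) (nhdsWithin 0 (Set.Ioi 0)) (nhds (F 0).im) :=
      (Complex.continuous_im.tendsto _).comp htend
    have h2 : Filter.Tendsto (fun ε => (F ε).im) (nhdsWithin 0 (Set.Ioi 0)) (nhds 0) := by
      apply Filter.Tendsto.congr' _ tendsto_const_nhds
      filter_upwards [self_mem_nhdsWithin] with ε hε
      exact ((Complex.le_def.mp (hFnonneg ε hε)).2).symm ▸ rfl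
    exact tendsto_nhds_unique h1 h2
  rw [Complex.le_def]
  simp [hre, him]

section hpow
variable {m : ℕ}

lemma hpow_eq {A : Matrix (Fin m) (Fin m) ℂ} (hA : A.IsHermitian) (p : ℝ) :
    hpow A p = hA.cfc (fun t => t ^ p) := dif_pos hA

lemma hpow_psd {A : Matrix (Fin m) (Fin m) ℂ} (hA : A.PosSemidef) (p : ℝ) :
    (hpow A p).PosSemidef := by
  rw [hpow_eq hA.1]
  exact cfc_psd _ _ fun i => Real.rpow_nonneg (hA.eigenvalues_nonneg i) p

lemma hpow_one {A : Matrix (Fin m) (Fin m) ℂ} (hA : A.IsHermitian) : hpow A 1 = A := by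
  rw [hpow_eq hA, show (fun t : ℝ => t ^ (1:ℝ)) = fun t : ℝ => t from funext fun t =>
    Real.rpow_one t, cfc_id]

lemma commute_hpow {A B : Matrix (Fin m) (Fin m) ℂ} (hA : A.IsHermitian) (hB : B.IsHermitian)
    (p q : ℝ) (h : Commute A B) : Commute (hpow A p) (hpow B q) := by
  rw [hpow_eq hA, hpow_eq hB]
  exact (commute_cfc hB _ (commute_cfc hA _ h).symm).symm

lemma hpow_half {A : Matrix (Fin m) (Fin m) ℂ} (hA : A.PosSemidef) (k : ℕ) :
    hpow A (1 / 2 ^ (k + 1)) = (hpow_psd hA (1 / 2 ^ k)).sqrt := by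
  apply Matrix.PosSemidef.eq_sqrt_of_sq_eq (hpow_psd hA _)
  rw [pow_two, hpow_eq hA.1, hpow_eq hA.1, cfc_mul]
  refine cfc_congr _ fun i => ?_
  rw [← Real.rpow_add' (hA.eigenvalues_nonneg i) (by positivity)]
  norm_num
  rw [show (2:ℝ) ^ (k+1) = 2 ^ k * 2 by rw [pow_succ]]
  rw [show (2 ^ k * 2 : ℝ)⁻¹ + (2 ^ k * 2:ℝ)⁻¹ = ((2:ℝ) ^ k)⁻¹ by field_simp; ring]

lemma hpow_root_mono (k : ℕ) {A B : Matrix (Fin m) (Fin m) ℂ} (hA : A.PosSemidef)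
    (hB : B.PosSemidef) (hAB : (B - A).PosSemidef) :
    (hpow B (1 / 2 ^ k) - hpow A (1 / 2 ^ k)).PosSemidef := by
  induction k generalizing A B with
  | zero =>
    simpa [hpow_one hB.1, hpow_one hA.1] using hAB
  | succ k ih =>
    rw [hpow_half hA k, hpow_half hB k]
    exact sqrt_monotone (hpow_psd hA _) (hpow_psd hB _) (ih hA hB hAB)

lemma commute_ofFn_prod {j : ℕ} {B : Matrix (Fin m) (Fin m) ℂ} (x : Fin j → Matrix (Fin m) (Fin m) ℂ)
    (h : ∀ i, Commute B (x i)) : Commute B (List.ofFn x).prod :=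
  Commute.list_prod_right _ _ fun a ha => by
    obtain ⟨i, rfl⟩ := List.mem_ofFn.mp ha
    exact h i

lemma prod_of_sqrt {j : ℕ} (x : Fin j → Matrix (Fin m) (Fin m) ℂ)
    (hx : ∀ i, (x i).PosSemidef) (hc : ∀ i₁ i₂, Commute (x i₁) (x i₂)) :
    ((List.ofFn fun i => (hx i).sqrt).prod).PosSemidef ∧
      ((List.ofFn fun i => (hx i).sqrt).prod) ^ 2 = (List.ofFn x).prod := by
  induction j with
  | zero => simp [Matrix.PosSemidef.one]
  | succ j ih =>
    rw [List.ofFn_succ', List.ofFn_succ' (f := x), List.prod_concat, List.prod_concat]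
    set x' : Fin j → Matrix (Fin m) (Fin m) ℂ := fun i => x i.castSucc with hx'
    obtain ⟨ihP, ihSq⟩ := ih x' (fun i => hx _) (fun i₁ i₂ => hc _ _)
    set P := (List.ofFn fun i => (hx i.castSucc).sqrt).prod with hP
    set q := (hx (Fin.last j)).sqrt with hq
    have hqP : Commute q P := by
      apply commute_ofFn_prod
      intro i
      exact commute_sqrt (hx (Fin.last j))
        ((commute_sqrt (hx i.castSucc) (hc i.castSucc (Fin.last j))).symm)
    have hPpsd : P.PosSemidef := ihP
    have hmul : (P * q).PosSemidef :=
      psd_mul_of_commute hPpsd (hx (Fin.last j)).posSemidef_sqrt hqP.symm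
    refine ⟨hmul, ?_⟩
    rw [pow_two, show P * q * (P * q) = P * (q * P) * q by simp only [Matrix.mul_assoc],
      hqP.eq, show P * (P * q) * q = (P * P) * (q * q) by simp only [Matrix.mul_assoc],
      (hx (Fin.last j)).sqrt_mul_self, ← pow_two, ihSq]

end hpow

theorem aux (m k : ℕ) (x y : Fin (k + 1) → Matrix (Fin m) (Fin m) ℂ)
    (hx : ∀ i, (x i).PosSemidef) (hy : ∀ i, (y i).PosSemidef)
    (hxc : ∀ i j, Commute (x i) (x j)) (hyc : ∀ i j, Commute (y i) (y j))
    (hle : ∀ i, (y i - x i).PosSemidef) :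
    ((List.ofFn fun i => hpow (y i) (1 / 2 ^ k)).prod -
      (List.ofFn fun i => hpow (x i) (1 / 2 ^ k)).prod).PosSemidef := by
  induction k with
  | zero =>
    simpa [hpow_one (hx 0).1, hpow_one (hy 0).1] using hle 0
  | succ k ih =>
    -- split off the last factor
    rw [List.ofFn_succ' (f := fun i => hpow (y i) (1 / 2 ^ (k+1))),
      List.ofFn_succ' (f := fun i => hpow (x i) (1 / 2 ^ (k+1))),
      List.prod_concat, List.prod_concat]
    set x' : Fin (k + 1) → Matrix (Fin m) (Fin m) ℂ := fun i => x i.castSucc with hx'd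
    set y' : Fin (k + 1) → Matrix (Fin m) (Fin m) ℂ := fun i => y i.castSucc with hy'd
    -- the products of the 2^k-th roots
    set Qx := (List.ofFn fun i => hpow (x' i) (1 / 2 ^ k)).prod with hQx
    set Qy := (List.ofFn fun i => hpow (y' i) (1 / 2 ^ k)).prod with hQy
    have hIH : (Qy - Qx).PosSemidef :=
      ih x' y' (fun i => hx _) (fun i => hy _) (fun i j => hxc _ _) (fun i j => hyc _ _)
        (fun i => hle _)
    -- products of the 2^(k+1)-th roots of the first k+1 entries are sqrt of Qx
    have hroots : ∀ (zf : Fin (k+2) → Matrix (Fin m) (Fin m) ℂ)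
        (hz : ∀ i, (zf i).PosSemidef) (hzc : ∀ i j, Commute (zf i) (zf j)),
        ∃ hQ : ((List.ofFn fun i : Fin (k+1) => hpow (zf i.castSucc) (1 / 2 ^ k)).prod).PosSemidef,
          (List.ofFn fun i : Fin (k+1) => hpow (zf i.castSucc) (1 / 2 ^ (k+1))).prod = hQ.sqrt := by
      intro zf hz hzc
      have hpsd : ∀ i : Fin (k+1), (hpow (zf i.castSucc) (1 / 2 ^ k)).PosSemidef :=
        fun i => hpow_psd (hz _) _
      have hcomm : ∀ i₁ i₂ : Fin (k+1),
          Commute (hpow (zf i₁.castSucc) (1 / 2 ^ k)) (hpow (zf i₂.castSucc) (1 / 2 ^ k)) :=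
        fun i₁ i₂ => commute_hpow (hz _).1 (hz _).1 _ _ (hzc _ _)
      obtain ⟨h1, h2⟩ := prod_of_sqrt _ hpsd hcomm
      have hre : (List.ofFn fun i : Fin (k+1) => hpow (zf i.castSucc) (1 / 2 ^ (k+1))).prod
          = (List.ofFn fun i : Fin (k+1) => (hpsd i).sqrt).prod := by
        congr 1
        congr 1
        funext i
        exact hpow_half (hz _) k
      have hQpsd : ((List.ofFn fun i : Fin (k+1) => hpow (zf i.castSucc) (1 / 2 ^ k)).prod).PosSemidef := by
        rw [← h2]; exact h1.pow 2
      refine ⟨hQpsd, ?_⟩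
      rw [hre]
      exact Matrix.PosSemidef.eq_sqrt_of_sq_eq h1 hQpsd h2
    obtain ⟨hQxpsd, hRx⟩ := hroots x hx hxc
    obtain ⟨hQypsd, hRy⟩ := hroots y hy hyc
    rw [hRx, hRy]
    -- last factors
    have hzx : (hpow (x (Fin.last (k+1))) (1 / 2 ^ k)).PosSemidef := hpow_psd (hx _) _
    have hzy : (hpow (y (Fin.last (k+1))) (1 / 2 ^ k)).PosSemidef := hpow_psd (hy _) _
    rw [hpow_half (hx (Fin.last (k+1))) k, hpow_half (hy (Fin.last (k+1))) k]
    -- commutation of Q with last root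
    have hcx : Commute Qx (hpow (x (Fin.last (k+1))) (1 / 2 ^ k)) := by
      apply Commute.symm
      apply commute_ofFn_prod
      intro i
      exact commute_hpow (hx _).1 (hx _).1 _ _ (hxc _ _)
    have hcy : Commute Qy (hpow (y (Fin.last (k+1))) (1 / 2 ^ k)) := by
      apply Commute.symm
      apply commute_ofFn_prod
      intro i
      exact commute_hpow (hy _).1 (hy _).1 _ _ (hyc _ _)
    exact core hQxpsd hzx hQypsd hzy hcx hcy hIH
      (hpow_root_mono k (hx _) (hy _) (hle _))


end PR

/-- If `x₁,…,xₖ` are mutually commuting PSD matrices, `y₁,…,yₖ` are mutually commuting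
PSD matrices and `xᵢ ≤ yᵢ` for each `i`, then
`x₁^{1/2^{k-1}} ⋯ xₖ^{1/2^{k-1}} ≤ y₁^{1/2^{k-1}} ⋯ yₖ^{1/2^{k-1}}` (Loewner order). -/
theorem prod_root_le_prod_root (n k : ℕ)
    (x y : Fin k → Matrix (Fin n) (Fin n) ℂ)
    (hx : ∀ i, (x i).PosSemidef) (hy : ∀ i, (y i).PosSemidef)
    (hxc : ∀ i j, Commute (x i) (x j)) (hyc : ∀ i j, Commute (y i) (y j))
    (hle : ∀ i, (y i - x i).PosSemidef) :
    ((List.ofFn fun i => hpow (y i) (1 / 2 ^ (k - 1))).prod -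
      (List.ofFn fun i => hpow (x i) (1 / 2 ^ (k - 1))).prod).PosSemidef := by
  cases k with
  | zero =>
    simpa using Matrix.PosSemidef.zero
  | succ m =>
    simp only [Nat.add_sub_cancel]
    exact PR.aux n m x y hx hy hxc hyc hle
end

section
/- Let f be a convex function of n variables defined on a cube, let a₁,...,a_m be operators on a finite-dimensional Hilbert space with Σ_t a_t* a_t = 1, and let (x_{1t},...,x_{nt}) for each t be an abelian n-tuple of self-adjoint operators in the domain of f. If ξ is a unit vector and y_i = Σ_t a_t* x_{it} a_t, then f(⟨y₁ξ,ξ⟩,...,⟨yₙξ,ξ⟩) ≤ ⟨(Σ_t a_t* f(x_{1t},...,x_{nt}) a_t) ξ, ξ⟩. -/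
/-!
Writing `x_{it} = U_t diag(λ_{it}) U_t*`, every expectation `⟨a_t* U_t diag(d) U_t* a_t ξ, ξ⟩`
equals `∑_j d_j w_{tj}` with `w_{tj} = |(U_t* a_t ξ)_j|²`. These weights are nonnegative and, taking
`d = 1`, sum to `⟨Σ_t a_t* a_t ξ, ξ⟩ = 1`. Hence the left side is `f` at the convex combination
`∑ w_{tj} λ_{·tj}` of joint eigenvalues, the right side is `∑ w_{tj} f(λ_{·tj})`, and the claim is
the finite Jensen inequality.
-/

open Matrix

section

variable {m : Type*} [Fintype m]

lemma star_dotProduct_conjTranspose_mul_mulVec (B M : Matrix m m ℂ) (ξ : m → ℂ) :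
    star ξ ⬝ᵥ ((star B * M * B) *ᵥ ξ) = star (B *ᵥ ξ) ⬝ᵥ (M *ᵥ (B *ᵥ ξ)) := by
  rw [← mulVec_mulVec, ← mulVec_mulVec, dotProduct_mulVec, star_mulVec]
  rfl

variable [DecidableEq m]

lemma star_dotProduct_diagonal_mulVec (d : m → ℝ) (v : m → ℂ) :
    star v ⬝ᵥ (diagonal (fun j => (d j : ℂ)) *ᵥ v) =
      ((∑ j, d j * Complex.normSq (v j) : ℝ) : ℂ) := by
  push_cast
  refine Finset.sum_congr rfl fun j _ => ?_
  rw [mulVec_diagonal, Pi.star_apply, Complex.star_def, Complex.normSq_eq_conj_mul_self]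
  ring

lemma star_dotProduct_conj_diagonal_mulVec (A V : Matrix m m ℂ) (d : m → ℝ) (ξ : m → ℂ) :
    star ξ ⬝ᵥ ((star A * (V * diagonal (fun j => (d j : ℂ)) * star V) * A) *ᵥ ξ) =
      ((∑ j, d j * Complex.normSq ((star V *ᵥ (A *ᵥ ξ)) j) : ℝ) : ℂ) := by
  have hconj : star A * (V * diagonal (fun j => (d j : ℂ)) * star V) * A =
      star (star V * A) * diagonal (fun j => (d j : ℂ)) * (star V * A) := by
    simp only [star_mul, star_star, Matrix.mul_assoc]
  rw [hconj, star_dotProduct_conjTranspose_mul_mulVec, star_dotProduct_diagonal_mulVec,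
    mulVec_mulVec]

variable {ι : Type*} [Fintype ι]

lemma re_star_dotProduct_sum_conj_diagonal_mulVec (a V : ι → Matrix m m ℂ) (d : ι → m → ℝ)
    (ξ : m → ℂ) :
    (star ξ ⬝ᵥ ((∑ t, star (a t) * (V t * diagonal (fun j => (d t j : ℂ)) * star (V t)) * a t)
      *ᵥ ξ)).re = ∑ p : ι × m, Complex.normSq ((star (V p.1) *ᵥ (a p.1 *ᵥ ξ)) p.2) * d p.1 p.2 := by
  simp only [sum_mulVec, dotProduct_sum, star_dotProduct_conj_diagonal_mulVec, Complex.re_sum,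
    Complex.ofReal_re, Fintype.sum_prod_type, mul_comm]

end

theorem jensen_expectation_column_general (n m N : ℕ)
    (I : Fin n → Set ℝ)
    (f : (Fin n → ℝ) → ℝ) (hf : ConvexOn ℝ (Set.univ.pi I) f)
    (a : Fin N → Matrix (Fin m) (Fin m) ℂ)
    (ha : ∑ t, star (a t) * a t = 1)
    (x : Fin N → Fin n → Matrix (Fin m) (Fin m) ℂ)
    (U : Fin N → Matrix (Fin m) (Fin m) ℂ)
    (hU : ∀ t, U t ∈ Matrix.unitaryGroup (Fin m) ℂ)
    (lam : Fin N → Fin n → Fin m → ℝ)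
    (hx : ∀ t i, x t i = U t * Matrix.diagonal (fun j => (lam t i j : ℂ)) * star (U t))
    (hspec : ∀ t j, (fun i => lam t i j) ∈ Set.univ.pi I)
    (fx : Fin N → Matrix (Fin m) (Fin m) ℂ)
    (hfx : ∀ t, fx t =
      U t * Matrix.diagonal (fun j => (f (fun i => lam t i j) : ℂ)) * star (U t))
    (y : Fin n → Matrix (Fin m) (Fin m) ℂ)
    (hy : ∀ i, y i = ∑ t, star (a t) * x t i * a t)
    (ξ : Fin m → ℂ) (hξ : star ξ ⬝ᵥ ξ = 1) :
    f (fun i => (star ξ ⬝ᵥ (y i *ᵥ ξ)).re) ≤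
      (star ξ ⬝ᵥ ((∑ t, star (a t) * fx t * a t) *ᵥ ξ)).re := by
  set w : Fin N × Fin m → ℝ := fun p => Complex.normSq ((star (U p.1) *ᵥ (a p.1 *ᵥ ξ)) p.2)
  have hw_sum : ∑ p, w p = 1 := by
    have h := re_star_dotProduct_sum_conj_diagonal_mulVec a U (fun _ _ => 1) ξ
    simp only [Complex.ofReal_one, diagonal_one, mul_one, mem_unitaryGroup_iff.mp (hU _), ha,
      one_mulVec, hξ, Complex.one_re] at h
    exact h.symm
  have hy_expect : (fun i => (star ξ ⬝ᵥ (y i *ᵥ ξ)).re) = ∑ p, w p • fun i => lam p.1 i p.2 := by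
    ext i
    simp only [hy, hx, re_star_dotProduct_sum_conj_diagonal_mulVec, Finset.sum_apply,
      Pi.smul_apply, smul_eq_mul, w]
  have hfx_expect : (star ξ ⬝ᵥ ((∑ t, star (a t) * fx t * a t) *ᵥ ξ)).re =
      ∑ p, w p • f (fun i => lam p.1 i p.2) := by
    simp only [hfx, re_star_dotProduct_sum_conj_diagonal_mulVec, smul_eq_mul, w]
  rw [hy_expect, hfx_expect]
  exact hf.map_sum_le (fun p _ => Complex.normSq_nonneg _) hw_sum (fun p _ => hspec p.1 p.2)

/-- Jensen's inequality for expectation values with a unital column tuple: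
if `Σ_t a_t* a_t = 1`, each `(x_{1t},…,x_{nt})` is an abelian `n`-tuple of self-adjoint
matrices with joint spectrum in the cube where `f` is convex (encoded via simultaneous
diagonalizations), `f(x_{1t},…,x_{nt})` is given by multivariate functional calculus,
`y_i = Σ_t a_t* x_{it} a_t` and `ξ` is a unit vector, then
`f(⟨y₁ξ,ξ⟩,…,⟨yₙξ,ξ⟩) ≤ ⟨(Σ_t a_t* f(x_{1t},…,x_{nt}) a_t) ξ, ξ⟩`. -/
theorem jensen_expectation_column (n m N : ℕ)
    (I : Fin n → Set ℝ) (hI : ∀ i, (I i).OrdConnected)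
    (f : (Fin n → ℝ) → ℝ) (hf : ConvexOn ℝ (Set.univ.pi I) f)
    (a : Fin N → Matrix (Fin m) (Fin m) ℂ)
    (ha : ∑ t, star (a t) * a t = 1)
    (x : Fin N → Fin n → Matrix (Fin m) (Fin m) ℂ)
    (U : Fin N → Matrix (Fin m) (Fin m) ℂ)
    (hU : ∀ t, U t ∈ Matrix.unitaryGroup (Fin m) ℂ)
    (lam : Fin N → Fin n → Fin m → ℝ)
    (hx : ∀ t i, x t i = U t * Matrix.diagonal (fun j => (lam t i j : ℂ)) * star (U t))
    (hspec : ∀ t j, (fun i => lam t i j) ∈ Set.univ.pi I)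
    (fx : Fin N → Matrix (Fin m) (Fin m) ℂ)
    (hfx : ∀ t, fx t =
      U t * Matrix.diagonal (fun j => (f (fun i => lam t i j) : ℂ)) * star (U t))
    (y : Fin n → Matrix (Fin m) (Fin m) ℂ)
    (hy : ∀ i, y i = ∑ t, star (a t) * x t i * a t)
    (ξ : Fin m → ℂ) (hξ : star ξ ⬝ᵥ ξ = 1) :
    f (fun i => (star ξ ⬝ᵥ (y i *ᵥ ξ)).re) ≤
      (star ξ ⬝ᵥ ((∑ t, star (a t) * fx t * a t) *ᵥ ξ)).re :=
  jensen_expectation_column_general n m N I f hf a ha x U hU lam hx hspec fx hfx y hy ξ hξ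
end

section
/- (Ky Fan maximum principle) Let x be a self-adjoint operator on an m-dimensional Hilbert space, let k ≤ m, and let u₁,...,u_k be orthonormal vectors. Then Σ_{i=1}^k ⟨x u_i, u_i⟩ ≤ Σ_{i=1}^k x_{[i]}, where x_{[1]} ≥ ⋯ ≥ x_{[m]} are the eigenvalues of x in decreasing order. -/
open Matrix
open scoped ComplexOrder

/-- The values of a tuple of reals rearranged in decreasing order. -/
noncomputable def sortedDesc {m : ℕ} (a : Fin m → ℝ) : Fin m → ℝ :=
  fun i => (a ∘ Tuple.sort a) i.rev

lemma card_filter_lt_fin (m k : ℕ) (hk : k ≤ m) :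
    (Finset.univ.filter (fun i : Fin m => (i : ℕ) < k)).card = k := by
  have h : Finset.univ.filter (fun i : Fin m => (i : ℕ) < k)
      = Finset.map ⟨Fin.castLE hk, Fin.castLE_injective hk⟩ Finset.univ := by
    ext i
    simp only [Finset.mem_filter, Finset.mem_univ, true_and, Finset.mem_map,
      Function.Embedding.coeFn_mk]
    constructor
    · intro h; exact ⟨⟨i, h⟩, rfl⟩
    · rintro ⟨j, rfl⟩; exact j.2
  rw [h, Finset.card_map, Finset.card_univ, Fintype.card_fin]

lemma abel_bound (m k : ℕ) (hk : k ≤ m) (b q : Fin m → ℝ) (hb : Antitone b)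
    (hq0 : ∀ i, 0 ≤ q i) (hq1 : ∀ i, q i ≤ 1) (hqs : ∑ i, q i = (k : ℝ)) :
    ∑ i, b i * q i ≤ ∑ i ∈ Finset.univ.filter (fun i : Fin m => (i : ℕ) < k), b i := by
  rcases Nat.eq_zero_or_pos k with hk0 | hk0
  · subst hk0
    have hq : ∀ i ∈ Finset.univ, q i = 0 := by
      intro i _
      have := (Finset.sum_eq_zero_iff_of_nonneg (fun i _ => hq0 i)).mp (by simpa using hqs)
      exact this i (Finset.mem_univ i)
    have : ∑ i, b i * q i = 0 := Finset.sum_eq_zero fun i _ => by rw [hq i (Finset.mem_univ i), mul_zero]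
    rw [this]
    apply le_of_eq
    symm
    apply Finset.sum_eq_zero
    intro i hi
    simp at hi
  · set t : ℝ := b ⟨k - 1, by omega⟩ with ht
    have key : ∀ i : Fin m, b i * q i ≤ (if (i : ℕ) < k then b i - t else 0) + t * q i := by
      intro i
      by_cases h : (i : ℕ) < k
      · simp only [h, if_pos]
        have hbt : t ≤ b i := hb (by simp [Fin.le_def]; omega)
        nlinarith [hq1 i, hq0 i]
      · simp only [h, if_neg, not_false_iff]
        have hbt : b i ≤ t := hb (by simp [Fin.le_def]; omega)
        nlinarith [hq0 i]
    calc ∑ i, b i * q i ≤ ∑ i : Fin m, ((if (i : ℕ) < k then b i - t else 0) + t * q i) :=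
          Finset.sum_le_sum fun i _ => key i
      _ = (∑ i ∈ Finset.univ.filter (fun i : Fin m => (i : ℕ) < k), (b i - t)) + t * ∑ i, q i := by
          rw [Finset.sum_add_distrib, Finset.sum_filter, ← Finset.mul_sum]
      _ = ∑ i ∈ Finset.univ.filter (fun i : Fin m => (i : ℕ) < k), b i := by
          rw [hqs, Finset.sum_sub_distrib, Finset.sum_const, card_filter_lt_fin m k hk]
          ring

/-- Ky Fan's maximum principle: for a Hermitian `m × m` matrix `x`, `k ≤ m` and
orthonormal vectors `u₁,…,u_k`, one has `Σ_{i<k} ⟨x uᵢ, uᵢ⟩ ≤ Σ_{i<k} x_{[i]}`,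
where `x_{[1]} ≥ ⋯ ≥ x_{[m]}` are the eigenvalues of `x` in decreasing order. -/
theorem ky_fan_maximum_principle (m k : ℕ) (hk : k ≤ m)
    (x : Matrix (Fin m) (Fin m) ℂ) (hx : x.IsHermitian)
    (u : Fin k → (Fin m → ℂ))
    (hu : ∀ i j, star (u i) ⬝ᵥ u j = if i = j then (1 : ℂ) else 0) :
    ∑ i, (star (u i) ⬝ᵥ (x *ᵥ u i)).re ≤
      ∑ i ∈ Finset.univ.filter (fun i : Fin m => (i : ℕ) < k),
        sortedDesc hx.eigenvalues i := by
  set U : Matrix (Fin m) (Fin m) ℂ := (hx.eigenvectorUnitary : Matrix (Fin m) (Fin m) ℂ) with hU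
  have hUmem : U ∈ Matrix.unitaryGroup (Fin m) ℂ := hx.eigenvectorUnitary.2
  have hUU : U * star U = 1 := (Matrix.mem_unitaryGroup_iff).mp hUmem
  set lam : Fin m → ℝ := hx.eigenvalues with hlam
  set v : Fin k → Fin m → ℂ := fun i => star U *ᵥ u i with hv
  have hstar : ∀ z : ℂ, star z * z = ((Complex.normSq z : ℝ) : ℂ) := fun z => by
    rw [Complex.star_def, ← Complex.normSq_eq_conj_mul_self]
  have h1 : ∀ i, star (v i) = star (u i) ᵥ* U := fun i => by
    simp only [hv]
    rw [star_mulVec, ← Matrix.star_eq_conjTranspose, star_star]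
  -- orthonormality of v
  have hvon : ∀ i j, star (v i) ⬝ᵥ v j = if i = j then (1 : ℂ) else 0 := by
    intro i j
    rw [← hu i j, h1, hv]
    rw [← dotProduct_mulVec, mulVec_mulVec, hUU, one_mulVec]
  set p : Fin m → ℝ := fun j => ∑ i, Complex.normSq (v i j) with hp
  -- each v i is a unit vector
  have hnorm1 : ∀ i, ∑ j, Complex.normSq (v i j) = 1 := by
    intro i
    have h := hvon i i
    rw [if_pos rfl] at h
    have h2 : star (v i) ⬝ᵥ v i = ((∑ j, Complex.normSq (v i j) : ℝ) : ℂ) := by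
      simp only [dotProduct, Pi.star_apply]
      push_cast
      exact Finset.sum_congr rfl fun j _ => hstar _
    rw [h2] at h
    exact_mod_cast h
  have hpsum : ∑ j, p j = (k : ℝ) := by
    rw [hp]
    rw [Finset.sum_comm]
    simp [hnorm1]
  have hp0 : ∀ j, 0 ≤ p j := fun j => Finset.sum_nonneg fun i _ => Complex.normSq_nonneg _
  -- p j ≤ 1 via projection argument
  set C : Matrix (Fin k) (Fin m) ℂ := fun i j => v i j with hC
  have hCC : C * Cᴴ = 1 := by
    ext i i'
    simp only [Matrix.mul_apply, Matrix.conjTranspose_apply, Matrix.one_apply]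
    simp only [hC]
    rw [show ∑ j, v i j * star (v i' j) = star (v i') ⬝ᵥ v i by
      simp [dotProduct, mul_comm]]
    rw [hvon i' i]
    by_cases h : i = i' <;> simp [h, eq_comm]
  set P : Matrix (Fin m) (Fin m) ℂ := Cᴴ * C with hPdef
  have hP2 : P * P = P := by
    rw [hPdef, Matrix.mul_assoc, ← Matrix.mul_assoc C, hCC, Matrix.one_mul]
  have hPH : Pᴴ = P := by
    rw [hPdef, Matrix.conjTranspose_mul, Matrix.conjTranspose_conjTranspose]
  have hPdiag : ∀ j, P j j = ((p j : ℝ) : ℂ) := by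
    intro j
    simp only [hPdef, Matrix.mul_apply, Matrix.conjTranspose_apply]
    simp only [hC, hp]
    push_cast
    exact Finset.sum_congr rfl fun i _ => hstar _
  have hp1 : ∀ j, p j ≤ 1 := by
    intro j
    set Q : Matrix (Fin m) (Fin m) ℂ := 1 - P with hQdef
    have hPQ : P * (1 - P) = 0 := by
      rw [Matrix.mul_sub, Matrix.mul_one, hP2, sub_self]
    have hQ2 : Q * Q = Q := by
      rw [hQdef, Matrix.sub_mul, hPQ, Matrix.one_mul, sub_zero]
    have hQH : Qᴴ = Q := by
      rw [hQdef, Matrix.conjTranspose_sub, hPH, Matrix.conjTranspose_one]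
    have hQdiag : Q j j = ((∑ l, Complex.normSq (Q j l) : ℝ) : ℂ) := by
      calc Q j j = (Q * Qᴴ) j j := by rw [hQH, hQ2]
        _ = ∑ l, Q j l * star (Q j l) := by
            simp [Matrix.mul_apply, Matrix.conjTranspose_apply]
        _ = ((∑ l, Complex.normSq (Q j l) : ℝ) : ℂ) := by
            push_cast
            exact Finset.sum_congr rfl fun l _ => by rw [mul_comm, hstar]
    have hQjj : Q j j = 1 - ((p j : ℝ) : ℂ) := by
      rw [hQdef]
      simp [Matrix.sub_apply, Matrix.one_apply, hPdiag j]
    rw [hQjj] at hQdiag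
    have : (1 : ℝ) - p j = ∑ l, Complex.normSq (Q j l) := by exact_mod_cast hQdiag
    have hnn : 0 ≤ ∑ l, Complex.normSq (Q j l) :=
      Finset.sum_nonneg fun l _ => Complex.normSq_nonneg _
    linarith [this ▸ hnn]
  -- rewrite LHS using spectral theorem
  have hLHS : ∀ i, (star (u i) ⬝ᵥ (x *ᵥ u i)).re = ∑ j, lam j * Complex.normSq (v i j) := by
    intro i
    conv_lhs => rw [hx.spectral_theorem, Unitary.conjStarAlgAut_apply]
    rw [← hU, ← Matrix.mulVec_mulVec, ← Matrix.mulVec_mulVec]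
    rw [Matrix.dotProduct_mulVec]
    rw [show star (u i) ᵥ* U = star (v i) from (h1 i).symm]
    have : star (v i) ⬝ᵥ (Matrix.diagonal (RCLike.ofReal ∘ lam) *ᵥ v i)
        = ((∑ j, lam j * Complex.normSq (v i j) : ℝ) : ℂ) := by
      simp only [dotProduct, Matrix.mulVec_diagonal, Function.comp_apply, Pi.star_apply]
      push_cast
      refine Finset.sum_congr rfl fun j _ => ?_
      rw [mul_comm ((RCLike.ofReal (lam j) : ℂ)) (v i j), ← mul_assoc, hstar]
      rw [show ((RCLike.ofReal (lam j) : ℂ)) = ((lam j : ℝ) : ℂ) from rfl]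
      ring
    rw [this, Complex.ofReal_re]
  rw [Finset.sum_congr rfl fun i _ => hLHS i]
  rw [Finset.sum_comm]
  have hfold : ∀ j, ∑ i, lam j * Complex.normSq (v i j) = lam j * p j := by
    intro j; rw [← Finset.mul_sum, hp]
  rw [Finset.sum_congr rfl fun j _ => hfold j]
  -- reindex by descending permutation
  set e : Fin m ≃ Fin m := Fin.revPerm.trans (Tuple.sort lam) with he
  have hre : ∑ j, lam j * p j = ∑ i, sortedDesc lam i * p (e i) := by
    rw [← Equiv.sum_comp e (fun j => lam j * p j)]
    apply Finset.sum_congr rfl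
    intro i _
    simp [he, sortedDesc, Equiv.trans_apply]
  rw [hre]
  exact abel_bound m k hk (sortedDesc lam) (fun i => p (e i))
    (fun i j hij => by
      simp only [sortedDesc, Function.comp_apply]
      exact Tuple.monotone_sort lam (Fin.rev_le_rev.mpr hij))
    (fun i => hp0 _) (fun i => hp1 _)
    (by rw [Equiv.sum_comp e p]; exact hpsum)
end

section
/- Let f be a convex function of n variables on a cube, a₁,...,a_m operators on a finite-dimensional Hilbert space with Σ_t a_t* a_t = 1, and for each t let (x_{1t},...,x_{nt}) be an abelian n-tuple of self-adjoint operators in the domain of f. If the operators y_i = Σ_t a_t* x_{it} a_t mutually commute, then f(y₁,...,yₙ) ≺_w Σ_t a_t* f(x_{1t},...,x_{nt}) a_t (weak majorization of eigenvalues). -/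
open Matrix
open scoped ComplexOrder Classical

/-- The eigenvalues of a Hermitian matrix in decreasing order (junk `0` otherwise). -/
noncomputable def eigDesc {m : ℕ} (A : Matrix (Fin m) (Fin m) ℂ) : Fin m → ℝ :=
  if h : A.IsHermitian then sortedDesc h.eigenvalues else 0

/-- Weak majorization `A ≺_w B` of Hermitian matrices: all partial sums of decreasingly
ordered eigenvalues of `A` are dominated by those of `B`. -/
def WeakMaj {m : ℕ} (A B : Matrix (Fin m) (Fin m) ℂ) : Prop :=
  ∀ k : ℕ, k ≤ m →
    ∑ i ∈ Finset.univ.filter (fun i : Fin m => (i : ℕ) < k), eigDesc A i ≤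
      ∑ i ∈ Finset.univ.filter (fun i : Fin m => (i : ℕ) < k), eigDesc B i

lemma sortedDesc_anti {m : ℕ} (a : Fin m → ℝ) : Antitone (sortedDesc a) := by
  intro i j hij
  exact Tuple.monotone_sort a (Fin.rev_le_rev.mpr hij)

lemma card_filter_lt {m k : ℕ} (hk : k ≤ m) :
    (Finset.univ.filter (fun i : Fin m => (i : ℕ) < k)).card = k := by
  refine (Finset.card_bij (fun (i : Fin m) _ => (i : ℕ)) ?_ ?_ ?_).trans (Finset.card_range k)
  · intro a ha; simp only [Finset.mem_filter] at ha; simpa using ha.2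
  · intro a _ b _ h; exact Fin.val_injective h
  · intro b hb
    simp only [Finset.mem_range] at hb
    exact ⟨⟨b, lt_of_lt_of_le hb hk⟩, by simp [hb], rfl⟩

lemma sum_sortedDesc_eq {m k : ℕ} (hk : k ≤ m) (a : Fin m → ℝ) :
    ∃ T : Finset (Fin m), T.card = k ∧
      ∑ i ∈ Finset.univ.filter (fun i : Fin m => (i : ℕ) < k), sortedDesc a i
        = ∑ j ∈ T, a j := by
  have hinj : Function.Injective (fun i : Fin m => Tuple.sort a i.rev) :=
    fun i j h => Fin.rev_injective ((Tuple.sort a).injective h)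
  refine ⟨(Finset.univ.filter (fun i : Fin m => (i : ℕ) < k)).image
      (fun i => Tuple.sort a i.rev), ?_, ?_⟩
  · rw [Finset.card_image_of_injective _ hinj, card_filter_lt hk]
  · rw [Finset.sum_image (fun i _ j _ h => hinj h)]
    rfl

lemma knapsack {m k : ℕ} (hk : k ≤ m) (μ c : Fin m → ℝ)
    (hc0 : ∀ l, 0 ≤ c l) (hc1 : ∀ l, c l ≤ 1) (hsum : ∑ l, c l = k) :
    ∑ l, c l * μ l ≤
      ∑ i ∈ Finset.univ.filter (fun i : Fin m => (i : ℕ) < k), sortedDesc μ i := by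
  rcases Nat.eq_zero_or_pos k with rfl | hkpos
  · have hzero : ∀ l ∈ Finset.univ, c l = 0 := by
      intro l _
      have := (Finset.sum_eq_zero_iff_of_nonneg (fun l _ => hc0 l)).mp (by simpa using hsum)
      exact this l (Finset.mem_univ l)
    have h1 : ∑ l, c l * μ l = 0 :=
      Finset.sum_eq_zero (fun l _ => by rw [hzero l (Finset.mem_univ l), zero_mul])
    have h2 : (Finset.univ.filter (fun i : Fin m => (i : ℕ) < 0)) = ∅ := by
      apply Finset.filter_false_of_mem; intro i _; omega
    rw [h1, h2, Finset.sum_empty]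
  · have hm : 0 < m := lt_of_lt_of_le hkpos hk
    set θ := sortedDesc μ ⟨k - 1, by omega⟩ with hθ
    have e : Fin m ≃ Fin m := (Fin.revPerm).trans (Tuple.sort μ)
    have hsd : ∀ i, sortedDesc μ i = μ ((Fin.revPerm.trans (Tuple.sort μ)) i) := fun i => rfl
    have key1 : ∑ l, c l * μ l = (∑ l, c l * (μ l - θ)) + k * θ := by
      have : ∑ l, c l * (μ l - θ) = (∑ l, c l * μ l) - (∑ l, c l) * θ := by
        rw [Finset.sum_mul, ← Finset.sum_sub_distrib]; congr 1; ext l; ring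
      rw [this, hsum]; ring
    have key2 : ∑ l, c l * (μ l - θ) ≤ ∑ l, max (μ l - θ) 0 := by
      apply Finset.sum_le_sum
      intro l _
      rcases le_or_gt 0 (μ l - θ) with h | h
      · calc c l * (μ l - θ) ≤ 1 * (μ l - θ) := by nlinarith [hc1 l]
          _ = μ l - θ := one_mul _
          _ ≤ max (μ l - θ) 0 := le_max_left _ _
      · calc c l * (μ l - θ) ≤ 0 := mul_nonpos_of_nonneg_of_nonpos (hc0 l) h.le
          _ ≤ max (μ l - θ) 0 := le_max_right _ _
    have key3 : ∑ l, max (μ l - θ) 0 = ∑ i, max (sortedDesc μ i - θ) 0 := by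
      rw [← Equiv.sum_comp (Fin.revPerm.trans (Tuple.sort μ)) (fun l => max (μ l - θ) 0)]
      rfl
    have key4 : ∑ i, max (sortedDesc μ i - θ) 0 =
        ∑ i ∈ Finset.univ.filter (fun i : Fin m => (i : ℕ) < k), (sortedDesc μ i - θ) := by
      rw [← Finset.sum_filter_add_sum_filter_not Finset.univ (fun i : Fin m => (i : ℕ) < k)]
      have h1 : ∀ i ∈ Finset.univ.filter (fun i : Fin m => (i : ℕ) < k),
          max (sortedDesc μ i - θ) 0 = sortedDesc μ i - θ := by
        intro i hi
        simp only [Finset.mem_filter] at hi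
        have : θ ≤ sortedDesc μ i := sortedDesc_anti μ (by simp [Fin.le_def]; omega)
        simp [max_eq_left, sub_nonneg.mpr this]
      have h2 : ∀ i ∈ Finset.univ.filter (fun i : Fin m => ¬ (i : ℕ) < k),
          max (sortedDesc μ i - θ) 0 = 0 := by
        intro i hi
        simp only [Finset.mem_filter] at hi
        have : sortedDesc μ i ≤ θ := sortedDesc_anti μ (by simp [Fin.le_def]; omega)
        simp [max_eq_right, sub_nonpos.mpr this]
      rw [Finset.sum_congr rfl h1, Finset.sum_congr rfl h2, Finset.sum_const_zero, add_zero]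
    have key5 : ∑ i ∈ Finset.univ.filter (fun i : Fin m => (i : ℕ) < k),
        (sortedDesc μ i - θ) =
        (∑ i ∈ Finset.univ.filter (fun i : Fin m => (i : ℕ) < k), sortedDesc μ i) - k * θ := by
      rw [Finset.sum_sub_distrib, Finset.sum_const, card_filter_lt hk, nsmul_eq_mul]
    linarith [key1, key2, key3 ▸ key2, key4, key5]

lemma dot_self_normSq {m : ℕ} (u v : Fin m → ℂ) :
    star u ⬝ᵥ v = ∑ l, (starRingEnd ℂ) (u l) * v l := by
  simp [dotProduct, Pi.star_apply, RCLike.star_def]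

lemma kyFan {m k : ℕ} (hk : k ≤ m) (μ : Fin m → ℝ) (w : Fin m → Fin m → ℂ)
    (hw : ∀ j j', star (w j) ⬝ᵥ w j' = if j = j' then 1 else 0)
    (T : Finset (Fin m)) (hT : T.card = k) :
    ∑ j ∈ T, ∑ l, μ l * Complex.normSq (w j l) ≤
      ∑ i ∈ Finset.univ.filter (fun i : Fin m => (i : ℕ) < k), sortedDesc μ i := by
  have hnorm1 : ∀ j, ∑ l, Complex.normSq (w j l) = 1 := by
    intro j
    have h := hw j j
    rw [if_pos rfl, dot_self_normSq] at h
    have h2 : ((∑ l, Complex.normSq (w j l) : ℝ) : ℂ) = 1 := by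
      push_cast
      rw [← h]
      exact Finset.sum_congr rfl fun l _ => Complex.normSq_eq_conj_mul_self
    exact_mod_cast h2
  -- orthonormal family in EuclideanSpace
  set v : Fin m → EuclideanSpace ℂ (Fin m) :=
    fun j => (WithLp.equiv 2 (Fin m → ℂ)).symm (w j) with hv
  have hON : Orthonormal ℂ v := by
    rw [orthonormal_iff_ite]
    intro i j
    have h := hw i j
    rw [dot_self_normSq] at h
    simpa [PiLp.inner_apply, RCLike.inner_apply, hv, mul_comm] using h
  set c : Fin m → ℝ := fun l => ∑ j ∈ T, Complex.normSq (w j l) with hc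
  have hc0 : ∀ l, 0 ≤ c l := fun l => Finset.sum_nonneg fun j _ => Complex.normSq_nonneg _
  have hc1 : ∀ l, c l ≤ 1 := by
    intro l
    have hB := hON.sum_inner_products_le (s := T) (EuclideanSpace.single l 1)
    have : ∀ j, ‖(inner ℂ (v j) (EuclideanSpace.single l (1:ℂ)) : ℂ)‖ ^ 2
        = Complex.normSq (w j l) := by
      intro j
      rw [EuclideanSpace.inner_single_right]
      simp [Complex.sq_norm, Complex.normSq_conj, hv, WithLp.equiv_symm_apply, PiLp.toLp_apply]
    calc c l = ∑ j ∈ T, ‖(inner ℂ (v j) (EuclideanSpace.single l (1:ℂ)) : ℂ)‖ ^ 2 := by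
          rw [hc]; exact (Finset.sum_congr rfl fun j _ => (this j)).symm
      _ ≤ ‖EuclideanSpace.single l (1:ℂ)‖ ^ 2 := hB
      _ = 1 := by rw [EuclideanSpace.norm_single]; norm_num
  have hcsum : ∑ l, c l = k := by
    rw [hc]
    rw [Finset.sum_comm]
    rw [Finset.sum_congr rfl fun j _ => hnorm1 j]
    simp [hT]
  have := knapsack hk μ c hc0 hc1 hcsum
  calc ∑ j ∈ T, ∑ l, μ l * Complex.normSq (w j l)
      = ∑ l, c l * μ l := by
        rw [Finset.sum_comm]; exact Finset.sum_congr rfl fun l _ => by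
          rw [hc, Finset.sum_mul]; exact Finset.sum_congr rfl fun j _ => by ring
    _ ≤ _ := this

lemma quad_eq {m : ℕ} (W : Matrix (Fin m) (Fin m) ℂ) (hW : W ∈ Matrix.unitaryGroup (Fin m) ℂ)
    (d : Fin m → ℝ) (v : Fin m → ℂ) :
    star v ⬝ᵥ ((W * Matrix.diagonal (fun l => (d l : ℂ)) * star W) *ᵥ v)
      = ((∑ l, d l * Complex.normSq ((star W *ᵥ v) l) : ℝ) : ℂ) := by
  set u : Fin m → ℂ := star W *ᵥ v with hu
  have h1 : (W * Matrix.diagonal (fun l => (d l : ℂ)) * star W) *ᵥ v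
      = W *ᵥ (Matrix.diagonal (fun l => (d l : ℂ)) *ᵥ u) := by
    rw [← Matrix.mulVec_mulVec, ← Matrix.mulVec_mulVec]
  rw [h1, Matrix.dotProduct_mulVec]
  have h2 : star v ᵥ* W = star u := by
    rw [hu, Matrix.star_mulVec, Matrix.star_eq_conjTranspose, Matrix.conjTranspose_conjTranspose]
  rw [h2]
  push_cast
  simp only [dotProduct, Pi.star_apply, Matrix.mulVec_diagonal]
  refine Finset.sum_congr rfl fun l _ => ?_
  rw [RCLike.star_def, Complex.normSq_eq_conj_mul_self]
  ring

lemma conj_quad {m : ℕ} (a M : Matrix (Fin m) (Fin m) ℂ) (v : Fin m → ℂ) :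
    star v ⬝ᵥ ((star a * M * a) *ᵥ v)
      = star (a *ᵥ v) ⬝ᵥ (M *ᵥ (a *ᵥ v)) := by
  rw [← Matrix.mulVec_mulVec, ← Matrix.mulVec_mulVec, Matrix.dotProduct_mulVec]
  congr 1
  rw [Matrix.star_mulVec, Matrix.star_eq_conjTranspose]

lemma unitary_preserves_dot {m : ℕ} (M : Matrix (Fin m) (Fin m) ℂ)
    (hM : star M * M = 1) (u u' : Fin m → ℂ) :
    star (M *ᵥ u) ⬝ᵥ (M *ᵥ u') = star u ⬝ᵥ u' := by
  rw [Matrix.star_mulVec, ← Matrix.dotProduct_mulVec, Matrix.mulVec_mulVec]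
  have h1 : Mᴴ * M = 1 := hM
  rw [h1, Matrix.one_mulVec]

lemma col_orthonormal {m : ℕ} (W : Matrix (Fin m) (Fin m) ℂ)
    (hW : W ∈ Matrix.unitaryGroup (Fin m) ℂ) (j j' : Fin m) :
    star (fun i => W i j) ⬝ᵥ (fun i => W i j') = if j = j' then 1 else 0 := by
  have h : star W * W = 1 := (Matrix.mem_unitaryGroup_iff'.mp hW)
  have := congrFun (congrFun h j) j'
  rw [Matrix.mul_apply, Matrix.one_apply] at this
  rw [← this]
  simp [dotProduct, Matrix.star_apply, Matrix.star_eq_conjTranspose, Matrix.conjTranspose_apply]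

lemma star_mulVec_col {m : ℕ} (W : Matrix (Fin m) (Fin m) ℂ)
    (hW : W ∈ Matrix.unitaryGroup (Fin m) ℂ) (j : Fin m) :
    star W *ᵥ (fun i => W i j) = Pi.single j 1 := by
  have h : star W * W = 1 := (Matrix.mem_unitaryGroup_iff'.mp hW)
  ext l
  have := congrFun (congrFun h l) j
  rw [Matrix.mul_apply, Matrix.one_apply] at this
  simp only [Matrix.mulVec, dotProduct]
  rw [this, Pi.single_apply]

lemma sum_normSq_single {m : ℕ} (c : Fin m → ℝ) (j : Fin m) :
    ∑ l, c l * Complex.normSq ((Pi.single j 1 : Fin m → ℂ) l) = c j := by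
  rw [Finset.sum_eq_single j]
  · simp
  · intro l _ hl
    rw [Pi.single_apply, if_neg hl]
    simp
  · simp

lemma kyFan_matrix {m k : ℕ} (hk : k ≤ m) (T : Finset (Fin m)) (hT : T.card = k)
    (A W : Matrix (Fin m) (Fin m) ℂ) (hW : W ∈ Matrix.unitaryGroup (Fin m) ℂ)
    (μ : Fin m → ℝ)
    (hA : A = W * Matrix.diagonal (fun l => (μ l : ℂ)) * star W)
    (v : Fin m → Fin m → ℂ)
    (hv : ∀ j j', star (v j) ⬝ᵥ v j' = if j = j' then 1 else 0)
    (r : Fin m → ℝ)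
    (hr : ∀ j ∈ T, ((r j : ℝ) : ℂ) = star (v j) ⬝ᵥ (A *ᵥ v j)) :
    ∑ j ∈ T, r j ≤
      ∑ i ∈ Finset.univ.filter (fun i : Fin m => (i : ℕ) < k), sortedDesc μ i := by
  set w : Fin m → Fin m → ℂ := fun j => star W *ᵥ v j with hwdef
  have hWstar : star (star W) * star W = 1 := by
    rw [star_star]
    exact Matrix.mem_unitaryGroup_iff.mp hW
  have hworth : ∀ j j', star (w j) ⬝ᵥ w j' = if j = j' then 1 else 0 := by
    intro j j'
    rw [hwdef]
    rw [unitary_preserves_dot (star W) hWstar]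
    exact hv j j'
  have hreq : ∀ j ∈ T, r j = ∑ l, μ l * Complex.normSq (w j l) := by
    intro j hj
    have h := hr j hj
    rw [hA, quad_eq W hW μ (v j)] at h
    exact_mod_cast h
  rw [Finset.sum_congr rfl hreq]
  exact kyFan hk μ w hworth T hT

lemma sorted_le_sorted {m k : ℕ} (hk : k ≤ m)
    (W₁ W₂ : Matrix (Fin m) (Fin m) ℂ)
    (h1 : W₁ ∈ Matrix.unitaryGroup (Fin m) ℂ) (h2 : W₂ ∈ Matrix.unitaryGroup (Fin m) ℂ)
    (α β : Fin m → ℝ)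
    (hAB : W₁ * Matrix.diagonal (fun l => (α l : ℂ)) * star W₁
         = W₂ * Matrix.diagonal (fun l => (β l : ℂ)) * star W₂) :
    ∑ i ∈ Finset.univ.filter (fun i : Fin m => (i : ℕ) < k), sortedDesc α i ≤
      ∑ i ∈ Finset.univ.filter (fun i : Fin m => (i : ℕ) < k), sortedDesc β i := by
  obtain ⟨T, hT, hTsum⟩ := sum_sortedDesc_eq hk α
  rw [hTsum]
  apply kyFan_matrix hk T hT _ W₂ h2 β rfl (fun j => (fun i => W₁ i j))
    (col_orthonormal W₁ h1)
  intro j _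
  rw [← hAB, quad_eq W₁ h1 α, star_mulVec_col W₁ h1 j, sum_normSq_single]

lemma dot_sum {m N : ℕ} (v : Fin m → ℂ) (z : Fin N → Fin m → ℂ) :
    v ⬝ᵥ (∑ t, z t) = ∑ t, v ⬝ᵥ z t := by
  simp only [dotProduct, Finset.sum_apply, Finset.mul_sum]
  rw [Finset.sum_comm]

lemma sum_mulVec' {m N : ℕ} (M : Fin N → Matrix (Fin m) (Fin m) ℂ) (v : Fin m → ℂ) :
    (∑ t, M t) *ᵥ v = ∑ t, M t *ᵥ v := by
  ext i
  simp only [Matrix.mulVec, dotProduct, Finset.sum_apply, Matrix.sum_apply, Finset.sum_mul]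
  rw [Finset.sum_comm]

lemma quad_sum_eq {m N : ℕ} (a U : Fin N → Matrix (Fin m) (Fin m) ℂ)
    (hU : ∀ t, U t ∈ Matrix.unitaryGroup (Fin m) ℂ)
    (r : Fin N → Fin m → ℝ) (v : Fin m → ℂ) :
    star v ⬝ᵥ ((∑ t, star (a t) * (U t * Matrix.diagonal (fun l => (r t l : ℂ)) * star (U t))
        * a t) *ᵥ v)
      = ((∑ t, ∑ l, r t l * Complex.normSq ((star (U t) *ᵥ (a t *ᵥ v)) l) : ℝ) : ℂ) := by
  rw [sum_mulVec', dot_sum]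
  have form : ∀ t, star v ⬝ᵥ ((star (a t) * (U t * Matrix.diagonal (fun l => (r t l : ℂ))
      * star (U t)) * a t) *ᵥ v)
      = ((∑ l, r t l * Complex.normSq ((star (U t) *ᵥ (a t *ᵥ v)) l) : ℝ) : ℂ) := by
    intro t
    rw [conj_quad, quad_eq (U t) (hU t)]
  rw [Finset.sum_congr rfl fun t _ => form t]
  push_cast
  rfl

lemma herm_decomp {m : ℕ} (g : Fin m → ℝ) (W : Matrix (Fin m) (Fin m) ℂ) :
    (W * Matrix.diagonal (fun l => (g l : ℂ)) * star W).IsHermitian := by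
  have hd : (Matrix.diagonal (fun l => (g l : ℂ))).IsHermitian := by
    have hs : (star fun l => ((g l : ℝ) : ℂ)) = fun l => ((g l : ℝ) : ℂ) := by
      funext l
      exact Complex.conj_ofReal _
    rw [Matrix.IsHermitian, Matrix.diagonal_conjTranspose, hs]
  rw [Matrix.star_eq_conjTranspose]
  exact Matrix.isHermitian_mul_mul_conjTranspose W hd

/-- If `f` is convex on a cube, `Σ_t a_t* a_t = 1`, each `(x_{1t},…,x_{nt})` is an abelian
tuple of self-adjoint matrices with joint spectrum in the cube, and the matrices
`y_i = Σ_t a_t* x_{it} a_t` mutually commute (with joint spectrum in the cube, encoded by a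
simultaneous diagonalization), then `f(y₁,…,yₙ) ≺_w Σ_t a_t* f(x_{1t},…,x_{nt}) a_t`. -/
theorem weakMaj_jensen_column (n m N : ℕ)
    (I : Fin n → Set ℝ) (hI : ∀ i, (I i).OrdConnected)
    (f : (Fin n → ℝ) → ℝ) (hf : ConvexOn ℝ (Set.univ.pi I) f)
    (a : Fin N → Matrix (Fin m) (Fin m) ℂ)
    (ha : ∑ t, star (a t) * a t = 1)
    (x : Fin N → Fin n → Matrix (Fin m) (Fin m) ℂ)
    (U : Fin N → Matrix (Fin m) (Fin m) ℂ)
    (hU : ∀ t, U t ∈ Matrix.unitaryGroup (Fin m) ℂ)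
    (lam : Fin N → Fin n → Fin m → ℝ)
    (hx : ∀ t i, x t i = U t * Matrix.diagonal (fun j => (lam t i j : ℂ)) * star (U t))
    (hspec : ∀ t j, (fun i => lam t i j) ∈ Set.univ.pi I)
    (fx : Fin N → Matrix (Fin m) (Fin m) ℂ)
    (hfx : ∀ t, fx t =
      U t * Matrix.diagonal (fun j => (f (fun i => lam t i j) : ℂ)) * star (U t))
    (y : Fin n → Matrix (Fin m) (Fin m) ℂ)
    (hy : ∀ i, y i = ∑ t, star (a t) * x t i * a t)
    (V : Matrix (Fin m) (Fin m) ℂ) (hV : V ∈ Matrix.unitaryGroup (Fin m) ℂ)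
    (mu : Fin n → Fin m → ℝ)
    (hyd : ∀ i, y i = V * Matrix.diagonal (fun j => (mu i j : ℂ)) * star V)
    (hspecy : ∀ j, (fun i => mu i j) ∈ Set.univ.pi I)
    (fy : Matrix (Fin m) (Fin m) ℂ)
    (hfy : fy = V * Matrix.diagonal (fun j => (f (fun i => mu i j) : ℂ)) * star V) :
    WeakMaj fy (∑ t, star (a t) * fx t * a t) := by
  classical
  set B : Matrix (Fin m) (Fin m) ℂ := ∑ t, star (a t) * fx t * a t with hB
  set dmf : Fin m → ℝ := fun j => f (fun i => mu i j) with hdmf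
  -- hermitian facts
  have hfyH : fy.IsHermitian := hfy ▸ herm_decomp dmf V
  have hfxH : ∀ t, (fx t).IsHermitian := fun t =>
    (hfx t) ▸ herm_decomp (fun j => f (fun i => lam t i j)) (U t)
  have hBH : B.IsHermitian := by
    rw [Matrix.IsHermitian, hB, Matrix.conjTranspose_sum]
    refine Finset.sum_congr rfl fun t _ => ?_
    have := Matrix.isHermitian_conjTranspose_mul_mul (a t) (hfxH t)
    rw [Matrix.star_eq_conjTranspose]
    exact this
  intro k hk
  have e1 : eigDesc fy = sortedDesc hfyH.eigenvalues := dif_pos hfyH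
  have e2 : eigDesc B = sortedDesc hBH.eigenvalues := dif_pos hBH
  simp only [e1, e2]
  -- spectral decompositions
  have hfy_spec : fy = (hfyH.eigenvectorUnitary : Matrix (Fin m) (Fin m) ℂ)
      * Matrix.diagonal (fun l => (hfyH.eigenvalues l : ℂ))
      * star (hfyH.eigenvectorUnitary : Matrix (Fin m) (Fin m) ℂ) := hfyH.spectral_theorem
  have hB_spec : B = (hBH.eigenvectorUnitary : Matrix (Fin m) (Fin m) ℂ)
      * Matrix.diagonal (fun l => (hBH.eigenvalues l : ℂ))
      * star (hBH.eigenvectorUnitary : Matrix (Fin m) (Fin m) ℂ) := hBH.spectral_theorem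
  -- Step A
  have stepA : ∑ i ∈ Finset.univ.filter (fun i : Fin m => (i : ℕ) < k),
        sortedDesc hfyH.eigenvalues i
      ≤ ∑ i ∈ Finset.univ.filter (fun i : Fin m => (i : ℕ) < k), sortedDesc dmf i := by
    apply sorted_le_sorted hk _ V (SetLike.coe_mem _) hV
    rw [← hfy_spec, hfy]
  -- Step B
  obtain ⟨T, hT, hTsum⟩ := sum_sortedDesc_eq hk dmf
  -- weights for each column j
  set w : Fin m → Fin N → Fin m → ℝ :=
    fun j t l => Complex.normSq ((star (U t) *ᵥ (a t *ᵥ (fun i => V i j))) l) with hw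
  have hw0 : ∀ j t l, 0 ≤ w j t l := fun j t l => Complex.normSq_nonneg _
  -- total weight is 1
  have hwsum : ∀ j, ∑ t, ∑ l, w j t l = 1 := by
    intro j
    have h1 : (1 : Matrix (Fin m) (Fin m) ℂ)
        = ∑ t, star (a t) * (U t * Matrix.diagonal (fun l => ((1:ℝ) : ℂ)) * star (U t)) * a t := by
      rw [← ha]
      refine Finset.sum_congr rfl fun t _ => ?_
      have : U t * Matrix.diagonal (fun _ : Fin m => ((1:ℝ) : ℂ)) * star (U t) = 1 := by
        rw [Complex.ofReal_one, Matrix.diagonal_one, mul_one]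
        exact Matrix.mem_unitaryGroup_iff.mp (hU t)
      rw [this, mul_one]
    have h2 : star (fun i => V i j) ⬝ᵥ ((1 : Matrix (Fin m) (Fin m) ℂ) *ᵥ (fun i => V i j))
        = ((∑ t, ∑ l, (1:ℝ) * w j t l : ℝ) : ℂ) := by
      rw [h1]
      exact quad_sum_eq a U hU (fun _ _ => (1:ℝ)) _
    rw [Matrix.one_mulVec, col_orthonormal V hV j j, if_pos rfl] at h2
    have h3 : (1 : ℝ) = ∑ t, ∑ l, (1:ℝ) * w j t l := by exact_mod_cast h2
    simpa using h3.symm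
  -- barycentre identity
  have hmu_eq : ∀ j i, mu i j = ∑ t, ∑ l, w j t l * lam t i l := by
    intro j i
    have q1 : star (fun i' => V i' j) ⬝ᵥ (y i *ᵥ (fun i' => V i' j))
        = ((mu i j : ℝ) : ℂ) := by
      rw [hyd i, quad_eq V hV, star_mulVec_col V hV j, sum_normSq_single]
    have q2 : star (fun i' => V i' j) ⬝ᵥ (y i *ᵥ (fun i' => V i' j))
        = ((∑ t, ∑ l, lam t i l * w j t l : ℝ) : ℂ) := by
      rw [hy i]
      have : ∀ t, star (a t) * x t i * a t
          = star (a t) * (U t * Matrix.diagonal (fun l => (lam t i l : ℂ)) * star (U t)) * a t := by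
        intro t; rw [hx t i]
      rw [Finset.sum_congr rfl fun t _ => this t]
      exact quad_sum_eq a U hU (fun t l => lam t i l) _
    have := q1.symm.trans q2
    have h4 : mu i j = ∑ t, ∑ l, lam t i l * w j t l := by exact_mod_cast this
    rw [h4]
    exact Finset.sum_congr rfl fun t _ => Finset.sum_congr rfl fun l _ => mul_comm _ _
  -- Jensen pointwise
  have jensen : ∀ j, dmf j ≤ ∑ t, ∑ l, f (fun i => lam t i l) * w j t l := by
    intro j
    have hb : (fun i => mu i j)
        = ∑ p ∈ (Finset.univ : Finset (Fin N × Fin m)), w j p.1 p.2 • (fun i => lam p.1 i p.2) := by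
      funext i
      rw [Finset.sum_apply]
      simp only [Pi.smul_apply, smul_eq_mul]
      rw [hmu_eq j i]
      exact (Fintype.sum_prod_type (f := fun p : Fin N × Fin m => w j p.1 p.2 * lam p.1 i p.2)).symm
    have hJ := hf.map_sum_le (t := (Finset.univ : Finset (Fin N × Fin m)))
      (w := fun p => w j p.1 p.2) (p := fun p => (fun i => lam p.1 i p.2))
      (fun p _ => hw0 j p.1 p.2)
      ((Fintype.sum_prod_type (f := fun p : Fin N × Fin m => w j p.1 p.2)).trans (hwsum j))
      (fun p _ => hspec p.1 p.2)
    rw [← hb] at hJ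
    calc dmf j = f (fun i => mu i j) := rfl
      _ ≤ ∑ p ∈ (Finset.univ : Finset (Fin N × Fin m)), w j p.1 p.2 • f (fun i => lam p.1 i p.2) := hJ
      _ = ∑ t, ∑ l, f (fun i => lam t i l) * w j t l := by
          rw [Fintype.sum_prod_type]
          exact Finset.sum_congr rfl fun t _ => Finset.sum_congr rfl fun l _ => by
            simp [mul_comm]
  -- final Ky Fan application
  have final : ∑ j ∈ T, (∑ t, ∑ l, f (fun i => lam t i l) * w j t l)
      ≤ ∑ i ∈ Finset.univ.filter (fun i : Fin m => (i : ℕ) < k), sortedDesc hBH.eigenvalues i := by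
    apply kyFan_matrix hk T hT B _ (SetLike.coe_mem _) hBH.eigenvalues hB_spec
      (fun j => (fun i => V i j)) (col_orthonormal V hV)
    intro j _
    have hBrw : B = ∑ t, star (a t)
        * (U t * Matrix.diagonal (fun l => ((f (fun i => lam t i l) : ℝ) : ℂ)) * star (U t))
        * a t := by
      rw [hB]
      exact Finset.sum_congr rfl fun t _ => by rw [hfx t]
    rw [hBrw, quad_sum_eq a U hU (fun t l => f (fun i => lam t i l)) _]
  calc ∑ i ∈ Finset.univ.filter (fun i : Fin m => (i : ℕ) < k), sortedDesc hfyH.eigenvalues i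
      ≤ ∑ i ∈ Finset.univ.filter (fun i : Fin m => (i : ℕ) < k), sortedDesc dmf i := stepA
    _ = ∑ j ∈ T, dmf j := hTsum
    _ ≤ ∑ j ∈ T, (∑ t, ∑ l, f (fun i => lam t i l) * w j t l) :=
        Finset.sum_le_sum fun j _ => jensen j
    _ ≤ _ := final
end

section
/- Let x and y be self-adjoint operators on a finite-dimensional Hilbert space, f a continuous increasing real function defined on an interval containing the spectra of x and y. If x ≤ y then trace f(x) ≤ trace f(y). -/
open Matrix
open scoped ComplexOrder Classical

/-- `f` applied to a Hermitian matrix via functional calculus (junk `0` otherwise). -/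
noncomputable def hfun {m : ℕ} (f : ℝ → ℝ) (A : Matrix (Fin m) (Fin m) ℂ) :
    Matrix (Fin m) (Fin m) ℂ :=
  if h : A.IsHermitian then h.cfc f else 0

section Aux
open Finset

variable {m : ℕ}

lemma quad_eq_s13 {A : Matrix (Fin m) (Fin m) ℂ} (hA : A.IsHermitian)
    (v : EuclideanSpace ℂ (Fin m)) :
    star (v : Fin m → ℂ) ⬝ᵥ (A *ᵥ v) =
      ((∑ i, hA.eigenvalues i * ‖hA.eigenvectorBasis.repr v i‖ ^ 2 : ℝ) : ℂ) := by
  set B := hA.eigenvectorBasis with hB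
  set c : Fin m → ℂ := fun i => B.repr v i with hc
  set w : EuclideanSpace ℂ (Fin m) := (WithLp.equiv 2 _).symm (A *ᵥ v) with hw
  have h1 : star (v : Fin m → ℂ) ⬝ᵥ (A *ᵥ v) = (inner ℂ v w : ℂ) := by
    rw [EuclideanSpace.inner_eq_star_dotProduct, dotProduct_comm]; rfl
  have hv : (v : Fin m → ℂ) = ∑ i, c i • ⇑(B i) := by
    have h := B.sum_repr v
    conv_lhs => rw [← h]
    ext j
    rw [Finset.sum_apply]
    simp [c]
  have key : ∀ j, (A *ᵥ (v : Fin m → ℂ)) j = ∑ i, (c i * hA.eigenvalues i) * B i j := by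
    intro j
    rw [hv, ← A.mulVecLin_apply, map_sum, Finset.sum_apply]
    refine Finset.sum_congr rfl fun i _ => ?_
    rw [LinearMap.map_smul, A.mulVecLin_apply, hA.mulVec_eigenvectorBasis]
    simp; ring
  have hAv : w = ∑ i, (c i * hA.eigenvalues i) • B i := by
    ext j
    rw [hw]
    show (A *ᵥ (v : Fin m → ℂ)) j = _
    rw [key j]
    rw [WithLp.ofLp_sum, Finset.sum_apply]
    rfl
  rw [h1, hAv, inner_sum]
  push_cast
  refine Finset.sum_congr rfl fun i _ => ?_
  rw [inner_smul_right]
  have h2 : (inner ℂ v (B i) : ℂ) = starRingEnd ℂ (c i) := by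
    rw [← inner_conj_symm, ← B.repr_apply_apply]
  rw [h2]
  have h3 : c i * starRingEnd ℂ (c i) = ((‖c i‖ : ℝ) : ℂ) ^ 2 := by
    rw [Complex.mul_conj']
  rw [mul_comm (c i) ((hA.eigenvalues i : ℂ)), mul_assoc, h3]

lemma repr_zero_of_span (B : OrthonormalBasis (Fin m) ℂ (EuclideanSpace ℂ (Fin m)))
    (P : Finset (Fin m)) (v : EuclideanSpace ℂ (Fin m))
    (hv : v ∈ Submodule.span ℂ (B '' (P : Set (Fin m)))) {j : Fin m} (hj : j ∉ P) :
    B.repr v j = 0 := by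
  rw [B.repr_apply_apply]
  have : Submodule.span ℂ (B '' (P : Set (Fin m))) ≤ LinearMap.ker (innerSL ℂ (B j)).toLinearMap := by
    rw [Submodule.span_le]
    rintro _ ⟨i, hi, rfl⟩
    simp only [SetLike.mem_coe, LinearMap.mem_ker, ContinuousLinearMap.coe_coe, innerSL_apply_apply]
    exact B.orthonormal.2 (fun h : j = i => hj (h ▸ hi))
  exact this hv

lemma sum_norm_repr (B : OrthonormalBasis (Fin m) ℂ (EuclideanSpace ℂ (Fin m)))
    (v : EuclideanSpace ℂ (Fin m)) :
    ∑ i, ‖B.repr v i‖ ^ 2 = ‖v‖ ^ 2 := by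
  have h1 : ‖B.repr v‖ = ‖v‖ := B.repr.norm_map v
  have h2 : ‖B.repr v‖ = Real.sqrt (∑ i, ‖B.repr v i‖ ^ 2) := EuclideanSpace.norm_eq _
  rw [← h1, h2, Real.sq_sqrt]
  exact Finset.sum_nonneg fun i _ => sq_nonneg _

lemma finrank_span_onb (B : OrthonormalBasis (Fin m) ℂ (EuclideanSpace ℂ (Fin m)))
    (P : Finset (Fin m)) :
    Module.finrank ℂ (Submodule.span ℂ (B '' (P : Set (Fin m)))) = P.card := by
  have himg : B '' (P : Set (Fin m)) = Set.range (fun i : (P : Set (Fin m)) => B i) :=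
    (Set.image_eq_range _ _)
  have hli : LinearIndependent ℂ (fun i : (P : Set (Fin m)) => B i) :=
    B.orthonormal.linearIndependent.comp Subtype.val Subtype.val_injective
  rw [himg, finrank_span_eq_card hli]
  simp

lemma count_lt_mono {x y : Matrix (Fin m) (Fin m) ℂ} (hx : x.IsHermitian) (hy : y.IsHermitian)
    (hle : (y - x).PosSemidef) (t : ℝ) :
    (univ.filter fun i => t < hx.eigenvalues i).card
      ≤ (univ.filter fun i => t < hy.eigenvalues i).card := by
  by_contra hcard
  push_neg at hcard
  set P := univ.filter fun i => t < hx.eigenvalues i with hP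
  set Q := univ.filter fun i => t < hy.eigenvalues i with hQ
  set Bx := hx.eigenvectorBasis
  set By := hy.eigenvectorBasis
  set V := Submodule.span ℂ (Bx '' (P : Set (Fin m))) with hV
  set W := Submodule.span ℂ (By '' ((Qᶜ : Finset (Fin m)) : Set (Fin m))) with hW
  have h1 : Module.finrank ℂ V = P.card := finrank_span_onb _ _
  have h2 : Module.finrank ℂ W = m - Q.card := by
    rw [finrank_span_onb]
    simp [Finset.card_compl]
  have hsum := Submodule.finrank_sup_add_finrank_inf_eq V W
  have hsup : Module.finrank ℂ ↥(V ⊔ W) ≤ m :=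
    le_trans (Submodule.finrank_le (V ⊔ W)) (le_of_eq finrank_euclideanSpace_fin)
  have hQm : Q.card ≤ m := by simpa using Q.card_le_univ
  have hpos : 0 < Module.finrank ℂ ↥(V ⊓ W) := by omega
  have hne : V ⊓ W ≠ ⊥ := by
    intro h
    rw [h, finrank_bot] at hpos
    exact lt_irrefl 0 hpos
  obtain ⟨v, hvmem, hvne⟩ := Submodule.exists_mem_ne_zero_of_ne_bot hne
  have hvV : v ∈ V := hvmem.1
  have hvW : v ∈ W := hvmem.2
  have hcx0 : ∀ j ∉ P, Bx.repr v j = 0 := fun j hj => repr_zero_of_span Bx P v hvV hj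
  have hcy0 : ∀ j ∈ Q, By.repr v j = 0 := fun j hj =>
    repr_zero_of_span By Qᶜ v hvW (by simpa using hj)
  have hnv : 0 < ‖v‖ ^ 2 := pow_pos (norm_pos_iff.mpr hvne) 2
  have hsx : ∑ i ∈ P, ‖Bx.repr v i‖ ^ 2 = ‖v‖ ^ 2 := by
    rw [← sum_norm_repr Bx v]
    exact (Finset.sum_subset (f := fun i => ‖Bx.repr v i‖ ^ 2) P.subset_univ (fun i _ hi => by simp [hcx0 i hi]))
  have hsy : ∑ i ∈ Qᶜ, ‖By.repr v i‖ ^ 2 = ‖v‖ ^ 2 := by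
    rw [← sum_norm_repr By v]
    exact (Finset.sum_subset (f := fun i => ‖By.repr v i‖ ^ 2) Qᶜ.subset_univ (fun i _ hi => by
      simp [hcy0 i (by simpa using hi)]))
  set Sx := ∑ i, hx.eigenvalues i * ‖Bx.repr v i‖ ^ 2 with hSx
  set Sy := ∑ i, hy.eigenvalues i * ‖By.repr v i‖ ^ 2 with hSy
  have hSxP : Sx = ∑ i ∈ P, hx.eigenvalues i * ‖Bx.repr v i‖ ^ 2 :=
    (Finset.sum_subset (f := fun i => hx.eigenvalues i * ‖Bx.repr v i‖ ^ 2) P.subset_univ (fun i _ hi => by simp [hcx0 i hi])).symm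
  have hSyQ : Sy = ∑ i ∈ Qᶜ, hy.eigenvalues i * ‖By.repr v i‖ ^ 2 :=
    (Finset.sum_subset (f := fun i => hy.eigenvalues i * ‖By.repr v i‖ ^ 2) Qᶜ.subset_univ (fun i _ hi => by
      simp [hcy0 i (by simpa using hi)])).symm
  have hxy : Sx ≤ Sy := by
    have h0 := hle.dotProduct_mulVec_nonneg (v : Fin m → ℂ)
    rw [Matrix.sub_mulVec, dotProduct_sub, quad_eq_s13 hx v, quad_eq_s13 hy v] at h0
    rw [sub_nonneg] at h0
    exact_mod_cast h0
  have hgt : t * ‖v‖ ^ 2 < Sx := by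
    rw [hSxP, ← hsx, Finset.mul_sum]
    obtain ⟨i0, hi0P, hi0⟩ : ∃ i ∈ P, ‖Bx.repr v i‖ ^ 2 ≠ 0 := by
      by_contra hall
      push_neg at hall
      rw [Finset.sum_eq_zero hall] at hsx
      exact hnv.ne' hsx.symm
    refine Finset.sum_lt_sum (fun i hi => ?_) ⟨i0, hi0P, ?_⟩
    · have h3 : t ≤ hx.eigenvalues i := le_of_lt (by simpa [hP] using hi)
      exact mul_le_mul_of_nonneg_right h3 (sq_nonneg _)
    · have h3 : t < hx.eigenvalues i0 := by simpa [hP] using hi0P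
      have h4 : 0 < ‖Bx.repr v i0‖ ^ 2 := lt_of_le_of_ne (sq_nonneg _) (Ne.symm hi0)
      exact mul_lt_mul_of_pos_right h3 h4
  have hlt : Sy ≤ t * ‖v‖ ^ 2 := by
    rw [hSyQ, ← hsy, Finset.mul_sum]
    refine Finset.sum_le_sum fun i hi => ?_
    have h3 : hy.eigenvalues i ≤ t := by
      have h4 := hi
      simp only [hQ, Finset.mem_compl, Finset.mem_filter, Finset.mem_univ, true_and] at h4
      exact le_of_not_gt h4
    exact mul_le_mul_of_nonneg_right h3 (sq_nonneg _)
  linarith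

lemma card_filter_perm (a : Fin m → ℝ) (σ : Equiv.Perm (Fin m)) (t : ℝ) :
    (univ.filter fun j => t < a (σ j)).card = (univ.filter fun i => t < a i).card := by
  refine Finset.card_bij' (fun j _ => σ j) (fun i _ => σ.symm i) ?_ ?_ ?_ ?_ <;>
      intro i hi <;> simp only [Finset.mem_filter, Finset.mem_univ, true_and] at hi ⊢ <;>
    first
      | exact hi
      | simpa using hi
      | simp

lemma sorted_le (a b : Fin m → ℝ)
    (hcnt : ∀ t : ℝ, (univ.filter fun i => t < a i).card ≤ (univ.filter fun i => t < b i).card)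
    (k : Fin m) : a (Tuple.sort a k) ≤ b (Tuple.sort b k) := by
  by_contra h
  push_neg at h
  set t := b (Tuple.sort b k) with ht
  have h1 : Finset.Ici k ⊆ univ.filter fun j => t < a (Tuple.sort a j) := by
    intro j hj
    simp only [Finset.mem_Ici] at hj
    simp only [Finset.mem_filter, Finset.mem_univ, true_and]
    exact lt_of_lt_of_le h (Tuple.monotone_sort a hj)
  have h2 : (univ.filter fun j => t < b (Tuple.sort b j)) ⊆ Finset.Ioi k := by
    intro j hj
    simp only [Finset.mem_filter, Finset.mem_univ, true_and] at hj
    simp only [Finset.mem_Ioi]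
    by_contra hle
    push_neg at hle
    exact absurd hj (not_lt.mpr (Tuple.monotone_sort b hle))
  have c1 := Finset.card_le_card h1
  have c2 := Finset.card_le_card h2
  rw [card_filter_perm a (Tuple.sort a) t] at c1
  rw [Fin.card_Ici] at c1
  rw [card_filter_perm b (Tuple.sort b) t] at c2
  rw [Fin.card_Ioi] at c2
  have := (c1.trans (hcnt t)).trans c2
  have hk := k.is_lt
  omega
lemma trace_hfun {A : Matrix (Fin m) (Fin m) ℂ} (hA : A.IsHermitian) (f : ℝ → ℝ) :
    (hfun f A).trace = ((∑ i, f (hA.eigenvalues i) : ℝ) : ℂ) := by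
  rw [hfun, dif_pos hA, Matrix.IsHermitian.cfc, Unitary.conjStarAlgAut_apply, Matrix.trace_mul_cycle,
    Unitary.star_mul_self_of_mem (SetLike.coe_mem _), Matrix.one_mul,
    Matrix.trace_diagonal]
  push_cast
  rfl

end Aux

/-- If `x ≤ y` (Loewner order) are Hermitian matrices and `f` is a continuous increasing
real function on an interval containing their spectra, then `trace f(x) ≤ trace f(y)`. -/
theorem trace_fun_monotone (m : ℕ)
    (s : Set ℝ) (hs : s.OrdConnected)
    (f : ℝ → ℝ) (hfc : ContinuousOn f s) (hfm : MonotoneOn f s)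
    (x y : Matrix (Fin m) (Fin m) ℂ)
    (hx : x.IsHermitian) (hy : y.IsHermitian)
    (hxs : ∀ i, hx.eigenvalues i ∈ s) (hys : ∀ i, hy.eigenvalues i ∈ s)
    (hle : (y - x).PosSemidef) :
    (hfun f x).trace ≤ (hfun f y).trace := by
  rw [trace_hfun hx f, trace_hfun hy f, Complex.real_le_real]
  have key : ∀ k : Fin m,
      hx.eigenvalues (Tuple.sort hx.eigenvalues k) ≤ hy.eigenvalues (Tuple.sort hy.eigenvalues k) :=
    sorted_le _ _ (count_lt_mono hx hy hle)
  calc ∑ i, f (hx.eigenvalues i)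
      = ∑ j, f (hx.eigenvalues (Tuple.sort hx.eigenvalues j)) :=
        (Equiv.sum_comp (Tuple.sort hx.eigenvalues) (fun i => f (hx.eigenvalues i))).symm
    _ ≤ ∑ j, f (hy.eigenvalues (Tuple.sort hy.eigenvalues j)) :=
        Finset.sum_le_sum fun j _ => hfm (hxs _) (hys _) (key j)
    _ = ∑ i, f (hy.eigenvalues i) :=
        Equiv.sum_comp (Tuple.sort hy.eigenvalues) (fun i => f (hy.eigenvalues i))
end

section
/- There exist 2×2 positive semidefinite matrices x ≤ y with y diagonal such that the diagonal part of x² is not ≤ y² in the Loewner order, although trace(x²) ≤ trace(y²). Concretely, for 0 < c < t < c√2 and λ > c/(t−c), the matrices x = c·(all-ones 2×2 matrix) and y = diag(t, λt) satisfy x ≤ y, diag(2c², 2c²) ≰ diag(t², λ²t²), and trace(x²) ≤ trace(y²). -/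
open Matrix
open scoped ComplexOrder

lemma psd2 (a b d : ℝ) (ha : 0 ≤ a) (hd : 0 ≤ d) (h : b ^ 2 ≤ a * d) :
    (!![(a : ℂ), b; b, d]).PosSemidef := by
  apply PosSemidef.of_dotProduct_mulVec_nonneg
  · show _ᴴ = _
    ext i j
    fin_cases i <;> fin_cases j <;> simp [Matrix.conjTranspose_apply]
  · intro z
    have key : ∀ x y u v : ℝ, 0 ≤ a * (x^2+y^2) + 2*b*(x*u+y*v) + d*(u^2+v^2) := by
      intro x y u v
      rcases ha.eq_or_lt with rfl | ha'
      · have hb : b = 0 := by nlinarith [sq_nonneg b]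
        subst hb
        nlinarith [mul_nonneg hd (add_nonneg (sq_nonneg u) (sq_nonneg v))]
      · nlinarith [sq_nonneg (a*x + b*u), sq_nonneg (a*y + b*v),
          mul_nonneg (sub_nonneg.mpr h) (add_nonneg (sq_nonneg u) (sq_nonneg v))]
    simp only [dotProduct, Matrix.mulVec, Fin.sum_univ_two, Pi.star_apply,
      Matrix.cons_val', Matrix.cons_val_zero, Matrix.cons_val_one, Matrix.head_cons,
      Matrix.empty_val', Matrix.cons_val_fin_one, Matrix.head_fin_const, dotProduct]
    rw [Complex.le_def]
    constructor
    · simp [Complex.add_re, Complex.mul_re, Complex.add_im, Complex.mul_im]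
      nlinarith [key (z 0).re (z 0).im (z 1).re (z 1).im]
    · simp [Complex.add_im, Complex.mul_im, Complex.mul_re]
      ring

/-- The counterexample of the paper: for `0 < c < t < c√2` and `λ > c/(t−c)`, the matrices
`x = [[c,c],[c,c]]` and `y = diag(t, λt)` satisfy `0 ≤ x ≤ y` (Loewner order), the diagonal
part `diag(2c², 2c²)` of `x²` is not `≤ y² = diag(t², λ²t²)`, yet `trace x² ≤ trace y²`. -/
theorem counterexample_diagonal_expectation (c t l : ℝ)
    (hc : 0 < c) (hct : c < t) (htc : t < c * Real.sqrt 2) (hl : c / (t - c) < l) :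
    (!![(c : ℂ), c; c, c]).PosSemidef ∧
    (!![(t : ℂ), 0; 0, l * t] - !![(c : ℂ), c; c, c]).PosSemidef ∧
    ¬ ((!![(t : ℂ), 0; 0, l * t] ^ 2) -
        !![(2 * c ^ 2 : ℂ), 0; 0, 2 * c ^ 2]).PosSemidef ∧
    (!![(c : ℂ), c; c, c] ^ 2).trace ≤ (!![(t : ℂ), 0; 0, l * t] ^ 2).trace := by
  have htc' : 0 < t - c := sub_pos.2 hct
  have hlu : c < l * (t - c) := (div_lt_iff₀ htc').mp hl
  have hl0 : 0 < l := by nlinarith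
  have ht2 : t ^ 2 < 2 * c ^ 2 := by
    nlinarith [Real.sq_sqrt (by norm_num : (2:ℝ) ≥ 0).le, Real.sqrt_nonneg 2, hc.le]
  refine ⟨?_, ?_, ?_, ?_⟩
  · exact psd2 c c c hc.le hc.le (by nlinarith)
  · have he : (!![(t : ℂ), 0; 0, l * t] - !![(c : ℂ), c; c, c]) =
        !![((t - c : ℝ) : ℂ), ((-c : ℝ) : ℂ); ((-c : ℝ) : ℂ), ((l * t - c : ℝ) : ℂ)] := by
      ext i j
      fin_cases i <;> fin_cases j <;> push_cast <;> simp
    rw [he]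
    exact psd2 (t - c) (-c) (l * t - c) htc'.le (by nlinarith) (by nlinarith)
  · intro h
    have := h.dotProduct_mulVec_nonneg ![1, 0]
    simp only [Matrix.sub_mulVec, dotProduct_sub, pow_two, Matrix.mulVec, dotProduct,
      Fin.sum_univ_two, Matrix.mul_apply, Pi.star_apply,
      Matrix.cons_val', Matrix.cons_val_zero, Matrix.cons_val_one, Matrix.head_cons,
      Matrix.empty_val', Matrix.cons_val_fin_one, Matrix.head_fin_const] at this
    norm_num at this
    have h2 : 2 * (c * c) ≤ t * t := by exact_mod_cast this
    nlinarith
  · have he : ∀ (M : Matrix (Fin 2) (Fin 2) ℂ), (M ^ 2).trace =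
        M 0 0 * M 0 0 + M 0 1 * M 1 0 + (M 1 0 * M 0 1 + M 1 1 * M 1 1) := by
      intro M
      simp [pow_two, Matrix.trace_fin_two, Matrix.mul_apply, Fin.sum_univ_two]
    rw [he, he]
    norm_num
    have hA2 : t ^ 2 * c ^ 2 < t ^ 2 * (l * (t - c)) ^ 2 := by
      have : c ^ 2 < (l * (t - c)) ^ 2 := by nlinarith
      exact mul_lt_mul_of_pos_left this (pow_pos (hc.trans hct) 2)
    have key : c * c + c * c + (c * c + c * c) ≤ t * t + l * t * (l * t) := by
      nlinarith [hA2, sq_nonneg (t - c), mul_pos htc' htc',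
        mul_nonneg (mul_nonneg hc.le htc'.le) (sq_nonneg (t - 2 * c)),
        mul_nonneg (sq_nonneg (t - 2 * c)) (add_nonneg (sq_nonneg (t - c)) (sq_nonneg c))]
    exact_mod_cast key
end

section
/- Let f be a convex function of n variables on a cube, and let (x₁,...,xₙ) be an abelian n-tuple of self-adjoint matrices in the domain of f. Then for any state φ (positive linear functional with φ(1)=1) on the matrix algebra, f(φ(x₁),...,φ(xₙ)) ≤ φ(f(x₁,...,xₙ)). -/
/-!
Conjugating by the diagonalizing unitary `U`, the state `φ` restricted to the commutative
algebra generated by the `xᵢ` is integration against the probability weights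
`wⱼ = φ(U Eⱼⱼ U*)`: these are nonnegative because `U Eⱼⱼ U*` is a projection, and they sum to
`φ(1) = 1` because the projections sum to `U U* = 1`. Hence `φ(xᵢ) = ∑ⱼ wⱼ λᵢⱼ` and
`φ(f(x)) = ∑ⱼ wⱼ f(λ·ⱼ)`, and the claim is the finite Jensen inequality.
-/

open Matrix
open scoped ComplexOrder

namespace Matrix

variable {ι : Type*} [DecidableEq ι]

lemma posSemidef_single_self_one {R : Type*} [CommRing R] [PartialOrder R] [StarRing R]
    [StarOrderedRing R] (j : ι) : (single j j (1 : R)).PosSemidef := by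
  rw [← diagonal_single]
  exact posSemidef_diagonal_iff.mpr fun i => by
    rcases eq_or_ne i j with rfl | h
    · simp
    · simp [h]

variable [Fintype ι]

lemma diagonal_eq_sum_smul_single {α : Type*} [Semiring α] (c : ι → α) :
    diagonal c = ∑ j, c j • single j j (1 : α) := by
  simp only [smul_single, smul_eq_mul, mul_one]
  exact (sum_single_eq_diagonal c).symm

lemma mul_diagonal_mul_star_eq_sum {α : Type*} [CommSemiring α] [StarRing α]
    (U : Matrix ι ι α) (c : ι → α) :
    U * diagonal c * star U = ∑ j, c j • (U * single j j 1 * star U) := by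
  rw [diagonal_eq_sum_smul_single, Finset.mul_sum, Finset.sum_mul]
  simp only [Matrix.mul_smul, Matrix.smul_mul]

lemma sum_mul_single_mul_star_eq_one {α : Type*} [CommRing α] [StarRing α]
    {U : Matrix ι ι α} (hU : U ∈ unitaryGroup ι α) :
    ∑ j, U * single j j 1 * star U = 1 := by
  calc ∑ j, U * single j j 1 * star U = U * diagonal (fun _ => 1) * star U := by
        simp only [mul_diagonal_mul_star_eq_sum, one_smul]
    _ = 1 := by rw [diagonal_one, mul_one, mem_unitaryGroup_iff.mp hU]

end Matrix

section State

variable {ι : Type*} [Fintype ι] [DecidableEq ι] (φ : Matrix ι ι ℂ →ₗ[ℂ] ℂ)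
  (U : Matrix ι ι ℂ)

noncomputable def spectralWeight (j : ι) : ℝ :=
  (φ (U * single j j 1 * star U)).re

lemma spectralWeight_nonneg (hφpos : ∀ a : Matrix ι ι ℂ, a.PosSemidef → 0 ≤ φ a) (j : ι) :
    0 ≤ spectralWeight φ U j :=
  (Complex.le_def.mp <| hφpos _ <| by
    simpa [star_eq_conjTranspose] using
      (posSemidef_single_self_one j).mul_mul_conjTranspose_same U).1

lemma sum_spectralWeight (hU : U ∈ unitaryGroup ι ℂ) (hφ1 : φ 1 = 1) :
    ∑ j, spectralWeight φ U j = 1 := by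
  simp only [spectralWeight, ← Complex.re_sum, ← map_sum, sum_mul_single_mul_star_eq_one hU,
    hφ1, Complex.one_re]

lemma re_map_mul_diagonal_ofReal_mul_star (c : ι → ℝ) :
    (φ (U * diagonal (fun j => (c j : ℂ)) * star U)).re = ∑ j, spectralWeight φ U j * c j := by
  simp only [mul_diagonal_mul_star_eq_sum, map_sum, map_smul, Complex.re_sum, smul_eq_mul,
    Complex.re_ofReal_mul, spectralWeight, mul_comm]

end State

theorem jensen_state_general (n m : ℕ)
    (I : Fin n → Set ℝ)
    (f : (Fin n → ℝ) → ℝ) (hf : ConvexOn ℝ (Set.univ.pi I) f)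
    (x : Fin n → Matrix (Fin m) (Fin m) ℂ)
    (U : Matrix (Fin m) (Fin m) ℂ) (hU : U ∈ Matrix.unitaryGroup (Fin m) ℂ)
    (lam : Fin n → Fin m → ℝ)
    (hx : ∀ i, x i = U * Matrix.diagonal (fun j => (lam i j : ℂ)) * star U)
    (hspec : ∀ j, (fun i => lam i j) ∈ Set.univ.pi I)
    (fx : Matrix (Fin m) (Fin m) ℂ)
    (hfx : fx = U * Matrix.diagonal (fun j => (f (fun i => lam i j) : ℂ)) * star U)
    (φ : Matrix (Fin m) (Fin m) ℂ →ₗ[ℂ] ℂ)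
    (hφpos : ∀ a : Matrix (Fin m) (Fin m) ℂ, a.PosSemidef → 0 ≤ φ a)
    (hφ1 : φ 1 = 1) :
    f (fun i => (φ (x i)).re) ≤ (φ fx).re := by
  have jensen := hf.map_sum_le (t := Finset.univ) (fun j _ => spectralWeight_nonneg φ U hφpos j)
    (sum_spectralWeight φ U hU hφ1) (fun j _ => hspec j)
  have hmean : (fun i => (φ (x i)).re) = ∑ j, spectralWeight φ U j • fun i => lam i j := by
    ext i
    simp only [hx, re_map_mul_diagonal_ofReal_mul_star, Finset.sum_apply, Pi.smul_apply,
      smul_eq_mul]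
  rw [hmean, hfx, re_map_mul_diagonal_ofReal_mul_star]
  simpa only [smul_eq_mul] using jensen

/-- Jensen's inequality under a state: if `f` is convex on a cube, `(x₁,…,xₙ)` is an
abelian `n`-tuple of self-adjoint matrices with joint spectrum in the cube (encoded by a
simultaneous diagonalization, with `f(x₁,…,xₙ)` given by multivariate functional
calculus), and `φ` is a state on the matrix algebra, then
`f(φ(x₁),…,φ(xₙ)) ≤ φ(f(x₁,…,xₙ))`. -/
theorem jensen_state (n m : ℕ)
    (I : Fin n → Set ℝ) (hI : ∀ i, (I i).OrdConnected)
    (f : (Fin n → ℝ) → ℝ) (hf : ConvexOn ℝ (Set.univ.pi I) f)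
    (x : Fin n → Matrix (Fin m) (Fin m) ℂ)
    (U : Matrix (Fin m) (Fin m) ℂ) (hU : U ∈ Matrix.unitaryGroup (Fin m) ℂ)
    (lam : Fin n → Fin m → ℝ)
    (hx : ∀ i, x i = U * Matrix.diagonal (fun j => (lam i j : ℂ)) * star U)
    (hspec : ∀ j, (fun i => lam i j) ∈ Set.univ.pi I)
    (fx : Matrix (Fin m) (Fin m) ℂ)
    (hfx : fx = U * Matrix.diagonal (fun j => (f (fun i => lam i j) : ℂ)) * star U)
    (φ : Matrix (Fin m) (Fin m) ℂ →ₗ[ℂ] ℂ)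
    (hφpos : ∀ a : Matrix (Fin m) (Fin m) ℂ, a.PosSemidef → 0 ≤ φ a)
    (hφ1 : φ 1 = 1) :
    f (fun i => (φ (x i)).re) ≤ (φ fx).re :=
  jensen_state_general n m I f hf x U hU lam hx hspec fx hfx φ hφpos hφ1
end
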